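/- arXiv:2408.01930 — 3 statements merged into one kernel-verified Lean document; each statement's English description precedes it below -/
import Mathlib

section
/- The Minkowskian product Finsler manifold (M̄ × M̃, F) with F² = f(F̄², F̃²) is Ricci-flat if and only if (M̄, F̄) and (M̃, F̃) are both Ricci-flat. -/
open Set

/-- Partial derivative in the `x`-variable, direction `k`. -/
noncomputable def pX {N : Type*} [Fintype N] [DecidableEq N]
    (g : (N → ℝ) → (N → ℝ) → ℝ) (k : N) (x y : N → ℝ) : ℝ :=
  fderiv ℝ (fun x' => g x' y) x (Pi.single k 1)

/-- Partial derivative in the `y`-variable, direction `k`. -/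
noncomputable def pY {N : Type*} [Fintype N] [DecidableEq N]
    (g : (N → ℝ) → (N → ℝ) → ℝ) (k : N) (x y : N → ℝ) : ℝ :=
  fderiv ℝ (fun y' => g x y') y (Pi.single k 1)

/-- Riemann curvature coefficients of a spray with coefficients `G`. -/
noncomputable def sprayRiemann {N : Type*} [Fintype N] [DecidableEq N]
    (G : N → (N → ℝ) → (N → ℝ) → ℝ) (i k : N) (x y : N → ℝ) : ℝ :=
  2 * pX (G i) k x y
    - ∑ j, y j * pX (fun x' y' => pY (G i) k x' y') j x y
    + 2 * ∑ j, G j x y * pY (fun x' y' => pY (G i) k x' y') j x y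
    - ∑ j, pY (G i) j x y * pY (G j) k x y


open Filter Function

namespace Stmt10Aux

variable {M : Type*} [Fintype M] [DecidableEq M]

lemma isOpen_s : IsOpen {p : (M → ℝ) × (M → ℝ) | p.2 ≠ 0} :=
  IsOpen.preimage continuous_snd isOpen_ne

variable {g : (M → ℝ) → (M → ℝ) → ℝ}

lemma diff_sliceX (hg : ContDiffOn ℝ (⊤ : ℕ∞) (fun p : (M → ℝ) × (M → ℝ) => g p.1 p.2) {p | p.2 ≠ 0})
    {x y : M → ℝ} (hy : y ≠ 0) : DifferentiableAt ℝ (fun x' => g x' y) x := by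
  have h1 : ContDiffAt ℝ (⊤ : ℕ∞) (fun p : (M → ℝ) × (M → ℝ) => g p.1 p.2) (x, y) :=
    hg.contDiffAt (isOpen_s.mem_nhds hy)
  exact (h1.comp x (ContDiffAt.prodMk contDiffAt_id contDiffAt_const)).differentiableAt (by simp)

lemma diff_sliceY (hg : ContDiffOn ℝ (⊤ : ℕ∞) (fun p : (M → ℝ) × (M → ℝ) => g p.1 p.2) {p | p.2 ≠ 0})
    {x y : M → ℝ} (hy : y ≠ 0) : DifferentiableAt ℝ (fun y' => g x y') y := by
  have h1 : ContDiffAt ℝ (⊤ : ℕ∞) (fun p : (M → ℝ) × (M → ℝ) => g p.1 p.2) (x, y) :=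
    hg.contDiffAt (isOpen_s.mem_nhds hy)
  exact (h1.comp y (ContDiffAt.prodMk contDiffAt_const contDiffAt_id)).differentiableAt (by simp)

lemma pY_rep (hg : ContDiffOn ℝ (⊤ : ℕ∞) (fun p : (M → ℝ) × (M → ℝ) => g p.1 p.2) {p | p.2 ≠ 0})
    (k : M) {x y : M → ℝ} (hy : y ≠ 0) :
    pY g k x y
      = fderiv ℝ (fun p : (M → ℝ) × (M → ℝ) => g p.1 p.2) (x, y) (0, Pi.single k 1) := by
  have hd : DifferentiableAt ℝ (fun p : (M → ℝ) × (M → ℝ) => g p.1 p.2) (x, y) :=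
    (hg.contDiffAt (isOpen_s.mem_nhds hy)).differentiableAt (by simp)
  have h1 : HasFDerivAt (fun y' => g x y')
      ((fderiv ℝ (fun p : (M → ℝ) × (M → ℝ) => g p.1 p.2) (x, y)).comp
        (ContinuousLinearMap.inr ℝ (M → ℝ) (M → ℝ))) y :=
    hd.hasFDerivAt.comp y (hasFDerivAt_prodMk_right x y)
  rw [pY, h1.fderiv]
  simp

lemma contDiffOn_pYfun (hg : ContDiffOn ℝ (⊤ : ℕ∞) (fun p : (M → ℝ) × (M → ℝ) => g p.1 p.2) {p | p.2 ≠ 0})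
    (k : M) : ContDiffOn ℝ (⊤ : ℕ∞)
      (fun p : (M → ℝ) × (M → ℝ) =>
        fderiv ℝ (fun q : (M → ℝ) × (M → ℝ) => g q.1 q.2) p (0, Pi.single k 1))
      {p | p.2 ≠ 0} := by
  have h := hg.fderiv_of_isOpen (m := (⊤ : ℕ∞)) isOpen_s (by simp)
  exact (ContinuousLinearMap.apply ℝ ℝ ((0 : M → ℝ), Pi.single k (1:ℝ))).contDiff.comp_contDiffOn h

lemma diff_pY_x (hg : ContDiffOn ℝ (⊤ : ℕ∞) (fun p : (M → ℝ) × (M → ℝ) => g p.1 p.2) {p | p.2 ≠ 0})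
    (k : M) {x y : M → ℝ} (hy : y ≠ 0) :
    DifferentiableAt ℝ (fun x' => pY g k x' y) x := by
  have h : (fun x' => pY g k x' y)
      = fun x' => fderiv ℝ (fun q : (M → ℝ) × (M → ℝ) => g q.1 q.2) (x', y) (0, Pi.single k 1) :=
    funext fun x' => pY_rep hg k hy
  rw [h]
  exact ((((contDiffOn_pYfun hg k).contDiffAt (isOpen_s.mem_nhds hy))).comp x
    (ContDiffAt.prodMk contDiffAt_id contDiffAt_const)).differentiableAt (by simp)

lemma diff_pY_y (hg : ContDiffOn ℝ (⊤ : ℕ∞) (fun p : (M → ℝ) × (M → ℝ) => g p.1 p.2) {p | p.2 ≠ 0})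
    (k : M) {x y : M → ℝ} (hy : y ≠ 0) :
    DifferentiableAt ℝ (fun y' => pY g k x y') y := by
  have hev : (fun y' => pY g k x y')
      =ᶠ[nhds y] fun y' => fderiv ℝ (fun q : (M → ℝ) × (M → ℝ) => g q.1 q.2) (x, y')
        (0, Pi.single k 1) :=
    eventuallyEq_of_mem (isOpen_ne.mem_nhds hy) (fun y' hy' => pY_rep hg k hy')
  have hd : DifferentiableAt ℝ
      (fun y' => fderiv ℝ (fun q : (M → ℝ) × (M → ℝ) => g q.1 q.2) (x, y')
        (0, Pi.single k 1)) y :=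
    ((((contDiffOn_pYfun hg k).contDiffAt (isOpen_s.mem_nhds hy))).comp y
      (ContDiffAt.prodMk contDiffAt_const contDiffAt_id)).differentiableAt (by simp)
  exact hd.congr_of_eventuallyEq hev

end Stmt10Aux

namespace Stmt10Aux

variable {M : Type*} [Fintype M] [DecidableEq M]
variable {N : Type*} [Fintype N] [DecidableEq N]

lemma continuous_restrict (ι : M → N) : Continuous (fun z : N → ℝ => z ∘ ι) :=
  continuous_pi fun b => continuous_apply (ι b)

lemma fderiv_comp_restrict (ι : M → N) (φ : (M → ℝ) → ℝ) {x : N → ℝ}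
    (hφ : DifferentiableAt ℝ φ (x ∘ ι)) (v : N → ℝ) :
    fderiv ℝ (fun z => φ (z ∘ ι)) x v = fderiv ℝ φ (x ∘ ι) (v ∘ ι) := by
  let E : (N → ℝ) →L[ℝ] (M → ℝ) :=
    ContinuousLinearMap.pi (fun b => ContinuousLinearMap.proj (ι b))
  have hE : ∀ z : N → ℝ, E z = z ∘ ι := fun z => rfl
  have h : (fun z : N → ℝ => φ (z ∘ ι)) = φ ∘ E := by
    funext z; simp [hE]
  have hφ' : DifferentiableAt ℝ φ (E x) := by rw [hE]; exact hφ
  rw [h, fderiv_comp x hφ' E.differentiableAt, E.fderiv]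
  simp [hE]

lemma single_comp_self {ι : M → N} (hι : Function.Injective ι) (b : M) :
    (Pi.single (ι b) (1:ℝ)) ∘ ι = Pi.single b 1 := by
  funext c
  simp [Function.comp, Pi.single_apply, hι.eq_iff]

section comp

variable (ι : M → N) {g : (M → ℝ) → (M → ℝ) → ℝ}
variable (hg : ContDiffOn ℝ (⊤ : ℕ∞) (fun p : (M → ℝ) × (M → ℝ) => g p.1 p.2) {p | p.2 ≠ 0})

include hg

lemma pX_comp (j : N) {x y : N → ℝ} (hy : y ∘ ι ≠ 0) :
    pX (fun x' y' => g (x' ∘ ι) (y' ∘ ι)) j x y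
      = fderiv ℝ (fun x₁ => g x₁ (y ∘ ι)) (x ∘ ι) ((Pi.single j 1) ∘ ι) := by
  simp only [pX]
  exact fderiv_comp_restrict ι (fun x₁ => g x₁ (y ∘ ι)) (diff_sliceX hg hy) _

lemma pY_comp (j : N) {x y : N → ℝ} (hy : y ∘ ι ≠ 0) :
    pY (fun x' y' => g (x' ∘ ι) (y' ∘ ι)) j x y
      = fderiv ℝ (fun y₁ => g (x ∘ ι) y₁) (y ∘ ι) ((Pi.single j 1) ∘ ι) := by
  simp only [pY]
  exact fderiv_comp_restrict ι (fun y₁ => g (x ∘ ι) y₁) (diff_sliceY hg hy) _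

lemma pXpY_comp (a : M) (j : N) {x y : N → ℝ} (hι : Function.Injective ι) (hy : y ∘ ι ≠ 0) :
    pX (fun x' y' => pY (fun x₁ y₁ => g (x₁ ∘ ι) (y₁ ∘ ι)) (ι a) x' y') j x y
      = fderiv ℝ (fun x₁ => pY g a x₁ (y ∘ ι)) (x ∘ ι) ((Pi.single j 1) ∘ ι) := by
  show fderiv ℝ (fun x' => pY (fun x₁ y₁ => g (x₁ ∘ ι) (y₁ ∘ ι)) (ι a) x' y) x (Pi.single j 1) = _
  have hsl : (fun x' => pY (fun x₁ y₁ => g (x₁ ∘ ι) (y₁ ∘ ι)) (ι a) x' y)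
      = fun x' => pY g a (x' ∘ ι) (y ∘ ι) := by
    funext x'
    rw [pY_comp ι hg (ι a) hy, single_comp_self hι a]
    rfl
  rw [hsl]
  exact fderiv_comp_restrict ι (fun x₁ => pY g a x₁ (y ∘ ι)) (diff_pY_x hg a hy) _

lemma pYpY_comp (a : M) (j : N) {x y : N → ℝ} (hι : Function.Injective ι) (hy : y ∘ ι ≠ 0) :
    pY (fun x' y' => pY (fun x₁ y₁ => g (x₁ ∘ ι) (y₁ ∘ ι)) (ι a) x' y') j x y
      = fderiv ℝ (fun y₁ => pY g a (x ∘ ι) y₁) (y ∘ ι) ((Pi.single j 1) ∘ ι) := by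
  show fderiv ℝ (fun y' => pY (fun x₁ y₁ => g (x₁ ∘ ι) (y₁ ∘ ι)) (ι a) x y') y (Pi.single j 1) = _
  have hopen : IsOpen {y' : N → ℝ | y' ∘ ι ≠ 0} :=
    IsOpen.preimage (continuous_restrict ι) isOpen_ne
  have hev : (fun y' => pY (fun x₁ y₁ => g (x₁ ∘ ι) (y₁ ∘ ι)) (ι a) x y')
      =ᶠ[nhds y] fun y' => pY g a (x ∘ ι) (y' ∘ ι) := by
    refine eventuallyEq_of_mem (hopen.mem_nhds hy) (fun y' hy' => ?_)
    rw [pY_comp ι hg (ι a) hy', single_comp_self hι a]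
    rfl
  rw [hev.fderiv_eq]
  exact fderiv_comp_restrict ι (fun y₁ => pY g a (x ∘ ι) y₁) (diff_pY_y hg a hy) _

end comp

end Stmt10Aux

namespace Stmt10Aux

variable {M : Type*} [Fintype M] [DecidableEq M]

lemma fderiv_comp_smul (c : ℝ) (φ : (M → ℝ) → ℝ) {y : M → ℝ}
    (hφ : DifferentiableAt ℝ φ (c • y)) (v : M → ℝ) :
    fderiv ℝ (fun z => φ (c • z)) y v = fderiv ℝ φ (c • y) (c • v) := by
  have h : (fun z : M → ℝ => φ (c • z)) = φ ∘ (c • ContinuousLinearMap.id ℝ (M → ℝ)) := by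
    funext z; simp
  have hφ' : DifferentiableAt ℝ φ ((c • ContinuousLinearMap.id ℝ (M → ℝ)) y) := by
    simpa using hφ
  rw [h, fderiv_comp y hφ' (c • ContinuousLinearMap.id ℝ (M → ℝ)).differentiableAt,
    (c • ContinuousLinearMap.id ℝ (M → ℝ)).fderiv]
  simp

section homog

variable {g : (M → ℝ) → (M → ℝ) → ℝ}
variable (hg : ContDiffOn ℝ (⊤ : ℕ∞) (fun p : (M → ℝ) × (M → ℝ) => g p.1 p.2) {p | p.2 ≠ 0})
variable {c : ℝ} (hc : 0 < c) (hcg : ∀ x₁ y₁, g x₁ (c • y₁) = c ^ 2 * g x₁ y₁)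

include hg hc hcg

lemma homog_pX (k : M) {x y : M → ℝ} (hy : y ≠ 0) :
    pX g k x (c • y) = c ^ 2 * pX g k x y := by
  simp only [pX]
  have h : (fun x' => g x' (c • y)) = fun x' => c ^ 2 * g x' y := funext fun x' => hcg x' y
  rw [h, fderiv_const_mul (diff_sliceX hg hy) (c ^ 2)]
  simp

lemma homog_pY (k : M) {x y : M → ℝ} (hy : y ≠ 0) :
    pY g k x (c • y) = c * pY g k x y := by
  have hcy : c • y ≠ 0 := smul_ne_zero hc.ne' hy
  have h1 : fderiv ℝ (fun z => g x (c • z)) y (Pi.single k 1)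
      = fderiv ℝ (fun y' => g x y') (c • y) (c • (Pi.single k 1 : M → ℝ)) :=
    fderiv_comp_smul c (fun y' => g x y') (diff_sliceY hg hcy) _
  have h2 : (fun z : M → ℝ => g x (c • z)) = fun z => c ^ 2 * g x z := funext (hcg x)
  have h3 : fderiv ℝ (fun z : M → ℝ => g x (c • z)) y (Pi.single k 1)
      = c ^ 2 * fderiv ℝ (fun y' => g x y') y (Pi.single k 1) := by
    rw [h2, fderiv_const_mul (diff_sliceY hg hy) (c ^ 2)]
    simp
  have h4 : fderiv ℝ (fun y' => g x y') (c • y) (c • (Pi.single k 1 : M → ℝ))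
      = c * fderiv ℝ (fun y' => g x y') (c • y) (Pi.single k 1) := by
    rw [map_smul]; simp
  have h5 : c * fderiv ℝ (fun y' => g x y') (c • y) (Pi.single k 1)
      = c * (c * fderiv ℝ (fun y' => g x y') y (Pi.single k 1)) := by
    rw [← h4, ← h1, h3]; ring
  have := mul_left_cancel₀ hc.ne' h5
  simpa only [pY] using this

lemma homog_pXpY (k j : M) {x y : M → ℝ} (hy : y ≠ 0) :
    pX (fun x' y' => pY g k x' y') j x (c • y)
      = c * pX (fun x' y' => pY g k x' y') j x y := by
  show fderiv ℝ (fun x' => pY g k x' (c • y)) x (Pi.single j 1)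
    = c * fderiv ℝ (fun x' => pY g k x' y) x (Pi.single j 1)
  have h : (fun x' => pY g k x' (c • y)) = fun x' => c * pY g k x' y :=
    funext fun x' => homog_pY hg hc hcg k hy
  rw [h, fderiv_const_mul (diff_pY_x hg k hy) c]
  simp

lemma homog_pYpY (k j : M) {x y : M → ℝ} (hy : y ≠ 0) :
    pY (fun x' y' => pY g k x' y') j x (c • y)
      = pY (fun x' y' => pY g k x' y') j x y := by
  have hcy : c • y ≠ 0 := smul_ne_zero hc.ne' hy
  show fderiv ℝ (fun y' => pY g k x y') (c • y) (Pi.single j 1)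
    = fderiv ℝ (fun y' => pY g k x y') y (Pi.single j 1)
  have hev : (fun z : M → ℝ => pY g k x (c • z)) =ᶠ[nhds y] fun z => c * pY g k x z :=
    eventuallyEq_of_mem (isOpen_ne.mem_nhds hy) (fun z hz => homog_pY hg hc hcg k hz)
  have h1 : fderiv ℝ (fun z : M → ℝ => pY g k x (c • z)) y (Pi.single j 1)
      = c * fderiv ℝ (fun y' => pY g k x y') (c • y) (Pi.single j 1) := by
    rw [fderiv_comp_smul c (fun y' => pY g k x y') (diff_pY_y hg k hcy) _, map_smul]
    simp
  have h2 : fderiv ℝ (fun z : M → ℝ => c * pY g k x z) y (Pi.single j 1)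
      = c * fderiv ℝ (fun y' => pY g k x y') y (Pi.single j 1) := by
    rw [fderiv_const_mul (diff_pY_y hg k hy) c]; simp
  have h3 := hev.fderiv_eq (𝕜 := ℝ)
  have h4 : c * fderiv ℝ (fun y' => pY g k x y') (c • y) (Pi.single j 1)
      = c * fderiv ℝ (fun y' => pY g k x y') y (Pi.single j 1) := by
    rw [← h1, ← h2, h3]
  exact mul_left_cancel₀ hc.ne' h4

end homog

end Stmt10Aux


namespace Stmt10Aux

variable {M : Type*} [Fintype M] [DecidableEq M]
variable {N : Type*} [Fintype N] [DecidableEq N]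

lemma sum_transfer (ι : M → N) (hι : Function.Injective ι) (h : N → ℝ)
    (hzero : ∀ j : N, (∀ b, j ≠ ι b) → h j = 0) :
    ∑ j, h j = ∑ b, h (ι b) := by
  classical
  rw [← Finset.sum_image (f := h) (g := ι) (by intro a _ b _ hab; exact hι hab)]
  refine (Finset.sum_subset (Finset.subset_univ _) ?_).symm
  intro j _ hj
  refine hzero j (fun b hb => hj ?_)
  exact Finset.mem_image.mpr ⟨b, Finset.mem_univ b, hb.symm⟩

lemma ric_split (g : M → (M → ℝ) → (M → ℝ) → ℝ)
    (hg : ∀ b, ContDiffOn ℝ (⊤ : ℕ∞) (fun p : (M → ℝ) × (M → ℝ) => g b p.1 p.2) {p | p.2 ≠ 0})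
    (ι : M → N) (hι : Function.Injective ι)
    (hcl : ∀ j : N, (∀ b, j ≠ ι b) → (Pi.single j (1:ℝ)) ∘ ι = 0)
    (G : N → (N → ℝ) → (N → ℝ) → ℝ)
    (hG : ∀ b x y, G (ι b) x y = g b (x ∘ ι) (y ∘ ι))
    (a : M) (x y : N → ℝ) (hy : y ∘ ι ≠ 0) :
    sprayRiemann G (ι a) (ι a) x y = sprayRiemann g a a (x ∘ ι) (y ∘ ι) := by
  have hGa : G (ι a) = fun x' y' => g a (x' ∘ ι) (y' ∘ ι) := by funext u v; exact hG a u v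
  simp only [sprayRiemann, hGa]
  have t1 : pX (fun x' y' => g a (x' ∘ ι) (y' ∘ ι)) (ι a) x y
      = pX (g a) a (x ∘ ι) (y ∘ ι) := by
    rw [pX_comp ι (hg a) (ι a) hy, single_comp_self hι a]; rfl
  have t2 : (∑ j, y j * pX (fun x' y' =>
        pY (fun x₁ y₁ => g a (x₁ ∘ ι) (y₁ ∘ ι)) (ι a) x' y') j x y)
      = ∑ b, (y ∘ ι) b * pX (fun x₁ y₁ => pY (g a) a x₁ y₁) b (x ∘ ι) (y ∘ ι) := by
    rw [sum_transfer ι hι _ (fun j hj => by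
      rw [pXpY_comp ι (hg a) a j hι hy, hcl j hj, map_zero, mul_zero])]
    refine Finset.sum_congr rfl (fun b _ => ?_)
    rw [pXpY_comp ι (hg a) a (ι b) hι hy, single_comp_self hι b]
    rfl
  have t3 : (∑ j, G j x y * pY (fun x' y' =>
        pY (fun x₁ y₁ => g a (x₁ ∘ ι) (y₁ ∘ ι)) (ι a) x' y') j x y)
      = ∑ b, g b (x ∘ ι) (y ∘ ι) * pY (fun x₁ y₁ => pY (g a) a x₁ y₁) b (x ∘ ι) (y ∘ ι) := by
    rw [sum_transfer ι hι _ (fun j hj => by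
      rw [pYpY_comp ι (hg a) a j hι hy, hcl j hj, map_zero, mul_zero])]
    refine Finset.sum_congr rfl (fun b _ => ?_)
    rw [hG b, pYpY_comp ι (hg a) a (ι b) hι hy, single_comp_self hι b]
    rfl
  have t4 : (∑ j, pY (fun x' y' => g a (x' ∘ ι) (y' ∘ ι)) j x y * pY (G j) (ι a) x y)
      = ∑ b, pY (g a) b (x ∘ ι) (y ∘ ι) * pY (g b) a (x ∘ ι) (y ∘ ι) := by
    rw [sum_transfer ι hι _ (fun j hj => by
      rw [pY_comp ι (hg a) j hy, hcl j hj, map_zero, zero_mul])]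
    refine Finset.sum_congr rfl (fun b _ => ?_)
    have hGb : G (ι b) = fun u v => g b (u ∘ ι) (v ∘ ι) := by funext u v; exact hG b u v
    rw [pY_comp ι (hg a) (ι b) hy, single_comp_self hι b, hGb,
      pY_comp ι (hg b) (ι a) hy, single_comp_self hι a]
    rfl
  rw [t1, t2, t3, t4]

lemma ric_homog (g : M → (M → ℝ) → (M → ℝ) → ℝ)
    (hg : ∀ b, ContDiffOn ℝ (⊤ : ℕ∞) (fun p : (M → ℝ) × (M → ℝ) => g b p.1 p.2) {p | p.2 ≠ 0})
    (hhom : ∀ b x₁ y₁ (c : ℝ), 0 < c → g b x₁ (c • y₁) = c ^ 2 * g b x₁ y₁)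
    (a : M) (x y : M → ℝ) (hy : y ≠ 0) (c : ℝ) (hc : 0 < c) :
    sprayRiemann g a a x (c • y) = c ^ 2 * sprayRiemann g a a x y := by
  have hcg : ∀ b x₁ y₁, g b x₁ (c • y₁) = c ^ 2 * g b x₁ y₁ :=
    fun b x₁ y₁ => hhom b x₁ y₁ c hc
  simp only [sprayRiemann]
  rw [homog_pX (hg a) hc (hcg a) a hy]
  have t2 : (∑ j, (c • y) j * pX (fun x' y' => pY (g a) a x' y') j x (c • y))
      = c ^ 2 * ∑ j, y j * pX (fun x' y' => pY (g a) a x' y') j x y := by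
    rw [Finset.mul_sum]
    refine Finset.sum_congr rfl (fun j _ => ?_)
    rw [homog_pXpY (hg a) hc (hcg a) a j hy]
    simp only [Pi.smul_apply, smul_eq_mul]
    ring
  have t3 : (∑ j, g j x (c • y) * pY (fun x' y' => pY (g a) a x' y') j x (c • y))
      = c ^ 2 * ∑ j, g j x y * pY (fun x' y' => pY (g a) a x' y') j x y := by
    rw [Finset.mul_sum]
    refine Finset.sum_congr rfl (fun j _ => ?_)
    rw [hcg j x y, homog_pYpY (hg a) hc (hcg a) a j hy]
    ring
  have t4 : (∑ j, pY (g a) j x (c • y) * pY (g j) a x (c • y))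
      = c ^ 2 * ∑ j, pY (g a) j x y * pY (g j) a x y := by
    rw [Finset.mul_sum]
    refine Finset.sum_congr rfl (fun j _ => ?_)
    rw [homog_pY (hg a) hc (hcg a) j hy, homog_pY (hg j) hc (hcg j) a hy]
    ring
  rw [t2, t3, t4]
  ring

end Stmt10Aux


open Stmt10Aux in
/-- A Minkowskian product Finsler manifold (whose spray splits into the factor
sprays) is Ricci-flat if and only if both factors are Ricci-flat.  The Ricci
curvature is the trace of the Riemann curvature of the spray. -/
theorem stmt10 (m n : ℕ) (hm : 0 < m) (hn : 0 < n)
    (Gbar : Fin m → (Fin m → ℝ) → (Fin m → ℝ) → ℝ)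
    (Gtil : Fin n → (Fin n → ℝ) → (Fin n → ℝ) → ℝ)
    (hGbar : ∀ a, ContDiffOn ℝ (⊤ : ℕ∞)
      (fun p : (Fin m → ℝ) × (Fin m → ℝ) => Gbar a p.1 p.2) {p | p.2 ≠ 0})
    (hGtil : ∀ α, ContDiffOn ℝ (⊤ : ℕ∞)
      (fun p : (Fin n → ℝ) × (Fin n → ℝ) => Gtil α p.1 p.2) {p | p.2 ≠ 0})
    -- spray coefficients are positively 2-homogeneous in `y`
    (hGbarhom : ∀ a x₁ y₁ (c : ℝ), 0 < c → Gbar a x₁ (c • y₁) = c ^ 2 * Gbar a x₁ y₁)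
    (hGtilhom : ∀ α x₂ y₂ (c : ℝ), 0 < c → Gtil α x₂ (c • y₂) = c ^ 2 * Gtil α x₂ y₂)
    -- the spray of the Minkowskian product splits into the factor sprays
    (G : (Fin m ⊕ Fin n) → ((Fin m ⊕ Fin n) → ℝ) → ((Fin m ⊕ Fin n) → ℝ) → ℝ)
    (hGl : ∀ a x y, G (Sum.inl a) x y = Gbar a (x ∘ Sum.inl) (y ∘ Sum.inl))
    (hGr : ∀ α x y, G (Sum.inr α) x y = Gtil α (x ∘ Sum.inr) (y ∘ Sum.inr)) :
    (∀ (x y : (Fin m ⊕ Fin n) → ℝ), y ∘ Sum.inl ≠ 0 → y ∘ Sum.inr ≠ 0 →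
        (∑ i : Fin m ⊕ Fin n, sprayRiemann G i i x y) = 0)
      ↔ ((∀ (x₁ y₁ : Fin m → ℝ), y₁ ≠ 0 →
            (∑ a : Fin m, sprayRiemann Gbar a a x₁ y₁) = 0) ∧
         (∀ (x₂ y₂ : Fin n → ℝ), y₂ ≠ 0 →
            (∑ α : Fin n, sprayRiemann Gtil α α x₂ y₂) = 0)) := by
  classical
  have hcll : ∀ j : Fin m ⊕ Fin n, (∀ b, j ≠ Sum.inl b) →
      (Pi.single j (1:ℝ)) ∘ (Sum.inl : Fin m → Fin m ⊕ Fin n) = 0 := by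
    intro j hj
    funext b
    cases j with
    | inl a => exact absurd rfl (hj a)
    | inr κ => simp [Function.comp, Pi.single_apply]
  have hclr : ∀ j : Fin m ⊕ Fin n, (∀ b, j ≠ Sum.inr b) →
      (Pi.single j (1:ℝ)) ∘ (Sum.inr : Fin n → Fin m ⊕ Fin n) = 0 := by
    intro j hj
    funext b
    cases j with
    | inl a => simp [Function.comp, Pi.single_apply]
    | inr κ => exact absurd rfl (hj κ)
  have key : ∀ (x y : (Fin m ⊕ Fin n) → ℝ), y ∘ Sum.inl ≠ 0 → y ∘ Sum.inr ≠ 0 →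
      (∑ i : Fin m ⊕ Fin n, sprayRiemann G i i x y)
        = (∑ a : Fin m, sprayRiemann Gbar a a (x ∘ Sum.inl) (y ∘ Sum.inl))
          + ∑ α : Fin n, sprayRiemann Gtil α α (x ∘ Sum.inr) (y ∘ Sum.inr) := by
    intro x y hyl hyr
    rw [Fintype.sum_sum_type]
    congr 1
    · exact Finset.sum_congr rfl fun a _ =>
        ric_split Gbar hGbar _ Sum.inl_injective hcll G hGl a x y hyl
    · exact Finset.sum_congr rfl fun α _ =>
        ric_split Gtil hGtil _ Sum.inr_injective hclr G hGr α x y hyr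
  have honem : ((fun _ => (1:ℝ)) : Fin m → ℝ) ≠ 0 := by
    intro h0
    have := congrFun h0 ⟨0, hm⟩
    norm_num at this
  have honen : ((fun _ => (1:ℝ)) : Fin n → ℝ) ≠ 0 := by
    intro h0
    have := congrFun h0 ⟨0, hn⟩
    norm_num at this
  constructor
  · intro H
    constructor
    · intro x₁ y₁ hy₁
      have h1 := H (Sum.elim x₁ 0) (Sum.elim y₁ (fun _ => 1))
        (by rw [Sum.elim_comp_inl]; exact hy₁) (by rw [Sum.elim_comp_inr]; exact honen)
      have h2 := H (Sum.elim x₁ 0) (Sum.elim y₁ ((2:ℝ) • (fun _ => (1:ℝ)) : Fin n → ℝ))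
        (by rw [Sum.elim_comp_inl]; exact hy₁)
        (by rw [Sum.elim_comp_inr]; exact smul_ne_zero (by norm_num) honen)
      rw [key _ _ (by rw [Sum.elim_comp_inl]; exact hy₁)
        (by rw [Sum.elim_comp_inr]; exact honen)] at h1
      rw [key _ _ (by rw [Sum.elim_comp_inl]; exact hy₁)
        (by rw [Sum.elim_comp_inr]; exact smul_ne_zero (by norm_num) honen)] at h2
      simp only [Sum.elim_comp_inl, Sum.elim_comp_inr] at h1 h2
      have h3 : (∑ α : Fin n, sprayRiemann Gtil α α 0 ((2:ℝ) • (fun _ => (1:ℝ)) : Fin n → ℝ))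
          = (2:ℝ) ^ 2 * ∑ α : Fin n, sprayRiemann Gtil α α 0 (fun _ => 1) := by
        rw [Finset.mul_sum]
        exact Finset.sum_congr rfl fun α _ =>
          ric_homog Gtil hGtil hGtilhom α 0 (fun _ => 1) honen 2 (by norm_num)
      rw [h3] at h2
      nlinarith [h1, h2]
    · intro x₂ y₂ hy₂
      have h1 := H (Sum.elim 0 x₂) (Sum.elim (fun _ => 1) y₂)
        (by rw [Sum.elim_comp_inl]; exact honem) (by rw [Sum.elim_comp_inr]; exact hy₂)
      have h2 := H (Sum.elim 0 x₂) (Sum.elim ((2:ℝ) • (fun _ => (1:ℝ)) : Fin m → ℝ) y₂)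
        (by rw [Sum.elim_comp_inl]; exact smul_ne_zero (by norm_num) honem)
        (by rw [Sum.elim_comp_inr]; exact hy₂)
      rw [key _ _ (by rw [Sum.elim_comp_inl]; exact honem)
        (by rw [Sum.elim_comp_inr]; exact hy₂)] at h1
      rw [key _ _ (by rw [Sum.elim_comp_inl]; exact smul_ne_zero (by norm_num) honem)
        (by rw [Sum.elim_comp_inr]; exact hy₂)] at h2
      simp only [Sum.elim_comp_inl, Sum.elim_comp_inr] at h1 h2
      have h3 : (∑ a : Fin m, sprayRiemann Gbar a a 0 ((2:ℝ) • (fun _ => (1:ℝ)) : Fin m → ℝ))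
          = (2:ℝ) ^ 2 * ∑ a : Fin m, sprayRiemann Gbar a a 0 (fun _ => 1) := by
        rw [Finset.mul_sum]
        exact Finset.sum_congr rfl fun a _ =>
          ric_homog Gbar hGbar hGbarhom a 0 (fun _ => 1) honem 2 (by norm_num)
      rw [h3] at h2
      nlinarith [h1, h2]
  · rintro ⟨H1, H2⟩ x y hyl hyr
    rw [key x y hyl hyr, H1 _ _ hyl, H2 _ _ hyr, add_zero]
end

section
/- Suppose the Minkowskian product Finsler manifold (M, F) = (M̄ × M̃, √f(K,H)) is Einstein with Ric_{ij} = (n−1)λ(x) g_{ij} for a scalar function λ(x), and λ(x₀) ≠ 0 at some point x₀. Then g_{aβ}(x₀, y) = 0 for all mixed indices and all y, i.e. f_{KH}(K(y₁), H(y₂)) K_a(y₁) H_β(y₂) = 0 for all (y₁, y₂). -/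
open Set

noncomputable def pd1 (f : ℝ → ℝ → ℝ) (s t : ℝ) : ℝ := deriv (fun u => f u t) s
noncomputable def pd2 (f : ℝ → ℝ → ℝ) (s t : ℝ) : ℝ := deriv (fun u => f s u) t

/-- Directional (partial) derivative of a function on a normed space. -/
noncomputable def dirD {E : Type*} [NormedAddCommGroup E] [NormedSpace ℝ E]
    (g : E → ℝ) (v : E) (y : E) : ℝ := fderiv ℝ g y v

/-- Second directional derivative. -/
noncomputable def dirD2 {E : Type*} [NormedAddCommGroup E] [NormedSpace ℝ E]
    (g : E → ℝ) (v w : E) (y : E) : ℝ := dirD (dirD g v) w y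


section Aux
variable {E₁ E₂ : Type*} [NormedAddCommGroup E₁] [NormedSpace ℝ E₁]
  [NormedAddCommGroup E₂] [NormedSpace ℝ E₂]

lemma auxPair (φ : E₁ → ℝ) (ψ : E₂ → ℝ) {z : E₁ × E₂}
    (hφ : DifferentiableAt ℝ φ z.1) (hψ : DifferentiableAt ℝ ψ z.2) :
    HasFDerivAt (fun p : E₁ × E₂ => (φ p.1, ψ p.2))
      (((fderiv ℝ φ z.1).comp (ContinuousLinearMap.fst ℝ E₁ E₂)).prod
        ((fderiv ℝ ψ z.2).comp (ContinuousLinearMap.snd ℝ E₁ E₂))) z :=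
  (hφ.hasFDerivAt.comp z hasFDerivAt_fst).prodMk (hψ.hasFDerivAt.comp z hasFDerivAt_snd)

lemma auxCompFst (φ : E₁ → ℝ) {z : E₁ × E₂} (hφ : DifferentiableAt ℝ φ z.1) (v : E₁ × E₂) :
    fderiv ℝ (fun p : E₁ × E₂ => φ p.1) z v = fderiv ℝ φ z.1 v.1 := by
  have h : HasFDerivAt (fun p : E₁ × E₂ => φ p.1)
      ((fderiv ℝ φ z.1).comp (ContinuousLinearMap.fst ℝ E₁ E₂)) z :=
    hφ.hasFDerivAt.comp z hasFDerivAt_fst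
  rw [h.fderiv]; rfl

lemma auxChain (F : ℝ × ℝ → ℝ) (φ : E₁ → ℝ) (ψ : E₂ → ℝ) {z : E₁ × E₂}
    (hF : DifferentiableAt ℝ F (φ z.1, ψ z.2)) (hφ : DifferentiableAt ℝ φ z.1)
    (hψ : DifferentiableAt ℝ ψ z.2) (v : E₁ × E₂) :
    fderiv ℝ (fun p : E₁ × E₂ => F (φ p.1, ψ p.2)) z v
      = fderiv ℝ F (φ z.1, ψ z.2) (fderiv ℝ φ z.1 v.1, fderiv ℝ ψ z.2 v.2) := by
  have h : HasFDerivAt (fun p : E₁ × E₂ => F (φ p.1, ψ p.2))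
      ((fderiv ℝ F (φ z.1, ψ z.2)).comp
        ((((fderiv ℝ φ z.1).comp (ContinuousLinearMap.fst ℝ E₁ E₂)).prod
          ((fderiv ℝ ψ z.2).comp (ContinuousLinearMap.snd ℝ E₁ E₂))))) z :=
    hF.hasFDerivAt.comp z (auxPair φ ψ hφ hψ)
  rw [h.fderiv]; rfl

end Aux

/-- `pd2 (pd1 f)` equals the (0,1)-directional derivative of the (1,0)-partial map. -/
lemma auxPd (f : ℝ → ℝ → ℝ)
    (hfsm : ContDiffOn ℝ (⊤ : ℕ∞) (fun p : ℝ × ℝ => f p.1 p.2) (Ioi 0 ×ˢ Ioi 0))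
    {s t : ℝ} (hs : 0 < s) (ht : 0 < t) :
    pd2 (pd1 f) s t
      = fderiv ℝ (fun p : ℝ × ℝ =>
          fderiv ℝ (fun q : ℝ × ℝ => f q.1 q.2) p ((1 : ℝ), (0 : ℝ))) (s, t) ((0 : ℝ), (1 : ℝ)) := by
  have hVopen : IsOpen (Ioi (0:ℝ) ×ˢ Ioi (0:ℝ)) := isOpen_Ioi.prod isOpen_Ioi
  have hFc : ∀ u v : ℝ, 0 < u → 0 < v →
      ContDiffAt ℝ (⊤ : ℕ∞) (fun p : ℝ × ℝ => f p.1 p.2) (u, v) := fun u v hu hv =>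
    hfsm.contDiffAt (hVopen.mem_nhds ⟨hu, hv⟩)
  have hPc : ContDiffAt ℝ (⊤ : ℕ∞) (fun p : ℝ × ℝ =>
      fderiv ℝ (fun q : ℝ × ℝ => f q.1 q.2) p ((1:ℝ), (0:ℝ))) (s, t) :=
    ((hFc s t hs ht).fderiv_right (by simp)).clm_apply contDiffAt_const
  have hev : (fun u => pd1 f s u) =ᶠ[nhds t]
      (fun u => fderiv ℝ (fun q : ℝ × ℝ => f q.1 q.2) (s, u) ((1:ℝ), (0:ℝ))) := by
    filter_upwards [Ioi_mem_nhds ht] with u hu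
    have hF' : DifferentiableAt ℝ (fun p : ℝ × ℝ => f p.1 p.2) (s, u) :=
      (hFc s u hs hu).differentiableAt (by simp)
    have hcurve : HasDerivAt (fun v : ℝ => f v u)
        (fderiv ℝ (fun p : ℝ × ℝ => f p.1 p.2) (s, u) ((1:ℝ), (0:ℝ))) s := by
      have h := hF'.hasFDerivAt.comp_hasDerivAt s
        ((hasDerivAt_id s).prodMk (hasDerivAt_const s u))
      simpa [Function.comp_def] using h
    exact hcurve.deriv
  rw [pd2, hev.deriv_eq]
  have hcurve2 : HasDerivAt (fun u : ℝ =>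
      fderiv ℝ (fun q : ℝ × ℝ => f q.1 q.2) (s, u) ((1:ℝ), (0:ℝ)))
      (fderiv ℝ (fun p : ℝ × ℝ =>
        fderiv ℝ (fun q : ℝ × ℝ => f q.1 q.2) p ((1:ℝ), (0:ℝ))) (s, t) ((0:ℝ), (1:ℝ))) t := by
    have h := (hPc.differentiableAt (by simp)).hasFDerivAt.comp_hasDerivAt t
      ((hasDerivAt_const t s).prodMk (hasDerivAt_id t))
    simpa [Function.comp_def] using h
  exact hcurve2.deriv

/-- If the Minkowskian product metric `F² = f(K,H)` is Einstein,
`Ric_{ij} = (n−1)λ(x) g_{ij}`, and `λ(x₀) ≠ 0`, then the mixed fundamental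
tensor components vanish at `x₀`:
`f_{KH}(K,H) · K_a · H_β = 0` for all fiber vectors and all mixed indices. -/
theorem stmt14 (m n : ℕ)
    (K : (Fin m → ℝ) → (Fin m → ℝ) → ℝ) (H : (Fin n → ℝ) → (Fin n → ℝ) → ℝ)
    (f : ℝ → ℝ → ℝ)
    (hfsm : ContDiffOn ℝ (⊤ : ℕ∞) (fun p : ℝ × ℝ => f p.1 p.2) (Ioi 0 ×ˢ Ioi 0))
    (hKsm : ∀ x₁, ContDiffOn ℝ (⊤ : ℕ∞) (K x₁) {y : Fin m → ℝ | y ≠ 0})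
    (hHsm : ∀ x₂, ContDiffOn ℝ (⊤ : ℕ∞) (H x₂) {y : Fin n → ℝ | y ≠ 0})
    (hKpos : ∀ x₁ y₁, y₁ ≠ 0 → 0 < K x₁ y₁)
    (hHpos : ∀ x₂ y₂, y₂ ≠ 0 → 0 < H x₂ y₂)
    (hKhom : ∀ x₁ y₁ (c : ℝ), 0 < c → K x₁ (c • y₁) = c ^ 2 * K x₁ y₁)
    (hHhom : ∀ x₂ y₂ (c : ℝ), 0 < c → H x₂ (c • y₂) = c ^ 2 * H x₂ y₂)
    -- Ricci curvature of the product splits (spray splitting):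
    (Ricbar : (Fin m → ℝ) → (Fin m → ℝ) → ℝ)
    (Rictil : (Fin n → ℝ) → (Fin n → ℝ) → ℝ)
    (hbar : ∀ x₁, ContDiffOn ℝ (⊤ : ℕ∞) (Ricbar x₁) {y : Fin m → ℝ | y ≠ 0})
    (htil : ∀ x₂, ContDiffOn ℝ (⊤ : ℕ∞) (Rictil x₂) {y : Fin n → ℝ | y ≠ 0})
    (lam : ((Fin m → ℝ) × (Fin n → ℝ)) → ℝ)
    (x₀ : (Fin m → ℝ) × (Fin n → ℝ)) (hlam : lam x₀ ≠ 0)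
    -- Einstein condition `Ric_{ij} = (n−1) λ(x) g_{ij}` for the product metric
    (hEinstein :
      let F2 : ((Fin m → ℝ) × (Fin n → ℝ)) → ((Fin m → ℝ) × (Fin n → ℝ)) → ℝ :=
        fun x y => f (K x.1 y.1) (H x.2 y.2)
      let Ric : ((Fin m → ℝ) × (Fin n → ℝ)) → ((Fin m → ℝ) × (Fin n → ℝ)) → ℝ :=
        fun x y => Ricbar x.1 y.1 + Rictil x.2 y.2
      let e : (Fin m ⊕ Fin n) → (Fin m → ℝ) × (Fin n → ℝ) :=
        Sum.elim (fun a => (Pi.single a 1, 0)) (fun β => (0, Pi.single β 1))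
      ∀ (i j : Fin m ⊕ Fin n) x y, y.1 ≠ 0 → y.2 ≠ 0 →
        (1 / 2 : ℝ) * dirD2 (Ric x) (e i) (e j) y
          = ((m + n : ℝ) - 1) * lam x * ((1 / 2 : ℝ) * dirD2 (F2 x) (e i) (e j) y)) :
    ∀ (y₁ : Fin m → ℝ) (y₂ : Fin n → ℝ), y₁ ≠ 0 → y₂ ≠ 0 →
      ∀ (a : Fin m) (β : Fin n),
        pd2 (pd1 f) (K x₀.1 y₁) (H x₀.2 y₂)
            * dirD (K x₀.1) (Pi.single a 1) y₁
            * dirD (H x₀.2) (Pi.single β 1) y₂ = 0 := by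
  intro y₁ y₂ hy₁ hy₂ a β
  have hVopen : IsOpen (Ioi (0:ℝ) ×ˢ Ioi (0:ℝ)) := isOpen_Ioi.prod isOpen_Ioi
  -- smoothness-at-a-point facts
  have hKc : ∀ z : Fin m → ℝ, z ≠ 0 → ContDiffAt ℝ (⊤ : ℕ∞) (K x₀.1) z := fun z hz =>
    (hKsm x₀.1).contDiffAt (isOpen_ne.mem_nhds hz)
  have hHc : ∀ z : Fin n → ℝ, z ≠ 0 → ContDiffAt ℝ (⊤ : ℕ∞) (H x₀.2) z := fun z hz =>
    (hHsm x₀.2).contDiffAt (isOpen_ne.mem_nhds hz)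
  have hRbc : ∀ z : Fin m → ℝ, z ≠ 0 → ContDiffAt ℝ (⊤ : ℕ∞) (Ricbar x₀.1) z := fun z hz =>
    (hbar x₀.1).contDiffAt (isOpen_ne.mem_nhds hz)
  have hRtc : ∀ z : Fin n → ℝ, z ≠ 0 → ContDiffAt ℝ (⊤ : ℕ∞) (Rictil x₀.2) z := fun z hz =>
    (htil x₀.2).contDiffAt (isOpen_ne.mem_nhds hz)
  have hFc : ∀ u v : ℝ, 0 < u → 0 < v →
      ContDiffAt ℝ (⊤ : ℕ∞) (fun p : ℝ × ℝ => f p.1 p.2) (u, v) := fun u v hu hv =>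
    hfsm.contDiffAt (hVopen.mem_nhds ⟨hu, hv⟩)
  have hUopen : IsOpen {z : (Fin m → ℝ) × (Fin n → ℝ) | z.1 ≠ 0 ∧ z.2 ≠ 0} :=
    (isOpen_ne.preimage continuous_fst).and (isOpen_ne.preimage continuous_snd)
  have hUmem : {z : (Fin m → ℝ) × (Fin n → ℝ) | z.1 ≠ 0 ∧ z.2 ≠ 0} ∈ nhds (y₁, y₂) :=
    hUopen.mem_nhds ⟨hy₁, hy₂⟩
  -- abbreviations
  set P : ℝ × ℝ → ℝ := fun p =>
    fderiv ℝ (fun q : ℝ × ℝ => f q.1 q.2) p ((1:ℝ), (0:ℝ)) with hPdef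
  set DKa : (Fin m → ℝ) → ℝ := fun z => fderiv ℝ (K x₀.1) z (Pi.single a 1) with hDKadef
  set DRa : (Fin m → ℝ) → ℝ := fun z => fderiv ℝ (Ricbar x₀.1) z (Pi.single a 1) with hDRadef
  -- ### Step 1: the mixed second derivative of F2 equals pd2(pd1 f)·K_a·H_β
  have key1 : ∀ z : (Fin m → ℝ) × (Fin n → ℝ), z.1 ≠ 0 → z.2 ≠ 0 →
      fderiv ℝ (fun y => f (K x₀.1 y.1) (H x₀.2 y.2)) z ((Pi.single a 1 : Fin m → ℝ), (0 : Fin n → ℝ))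
        = P (K x₀.1 z.1, H x₀.2 z.2) * DKa z.1 := by
    intro z hz1 hz2
    have h := auxChain (fun p : ℝ × ℝ => f p.1 p.2) (K x₀.1) (H x₀.2)
      ((hFc _ _ (hKpos _ _ hz1) (hHpos _ _ hz2)).differentiableAt (by simp))
      ((hKc z.1 hz1).differentiableAt (by simp))
      ((hHc z.2 hz2).differentiableAt (by simp))
      ((Pi.single a 1 : Fin m → ℝ), (0 : Fin n → ℝ))
    rw [h]
    have h0 : (fderiv ℝ (K x₀.1) z.1 (Pi.single a 1), fderiv ℝ (H x₀.2) z.2 0)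
        = DKa z.1 • ((1:ℝ), (0:ℝ)) := by
      simp [hDKadef, Prod.smul_mk]
    rw [h0, map_smul, smul_eq_mul, hPdef, mul_comm]
  have hEv1 : (fun z => fderiv ℝ (fun y => f (K x₀.1 y.1) (H x₀.2 y.2)) z
        ((Pi.single a 1 : Fin m → ℝ), (0 : Fin n → ℝ)))
      =ᶠ[nhds (y₁, y₂)] fun z => P (K x₀.1 z.1, H x₀.2 z.2) * DKa z.1 := by
    filter_upwards [hUmem] with z hz using key1 z hz.1 hz.2
  have hPdiff : DifferentiableAt ℝ P (K x₀.1 y₁, H x₀.2 y₂) :=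
    ((((hFc _ _ (hKpos _ _ hy₁) (hHpos _ _ hy₂)).fderiv_right (m := 1) (WithTop.coe_le_coe.mpr le_top)).clm_apply
      contDiffAt_const).differentiableAt one_ne_zero)
  have hDKadiff : DifferentiableAt ℝ DKa y₁ :=
    (((hKc y₁ hy₁).fderiv_right (m := 1) (WithTop.coe_le_coe.mpr le_top)).clm_apply contDiffAt_const).differentiableAt one_ne_zero
  have h1 : HasFDerivAt (fun z : (Fin m → ℝ) × (Fin n → ℝ) => P (K x₀.1 z.1, H x₀.2 z.2))
      ((fderiv ℝ P (K x₀.1 y₁, H x₀.2 y₂)).comp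
        (((fderiv ℝ (K x₀.1) y₁).comp (ContinuousLinearMap.fst ℝ _ _)).prod
          ((fderiv ℝ (H x₀.2) y₂).comp (ContinuousLinearMap.snd ℝ _ _)))) (y₁, y₂) :=
    (hPdiff.hasFDerivAt.comp (y₁, y₂) (auxPair (K x₀.1) (H x₀.2)
      (z := ((y₁, y₂) : (Fin m → ℝ) × (Fin n → ℝ)))
      ((hKc y₁ hy₁).differentiableAt (by simp)) ((hHc y₂ hy₂).differentiableAt (by simp))) :)
  have h2 : HasFDerivAt (fun z : (Fin m → ℝ) × (Fin n → ℝ) => DKa z.1)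
      ((fderiv ℝ DKa y₁).comp (ContinuousLinearMap.fst ℝ _ _)) (y₁, y₂) :=
    hDKadiff.hasFDerivAt.comp (f := Prod.fst) (y₁, y₂) hasFDerivAt_fst
  have hF2d2 : dirD2 (fun y => f (K x₀.1 y.1) (H x₀.2 y.2))
        ((Pi.single a 1 : Fin m → ℝ), (0 : Fin n → ℝ))
        ((0 : Fin m → ℝ), (Pi.single β 1 : Fin n → ℝ)) (y₁, y₂)
      = pd2 (pd1 f) (K x₀.1 y₁) (H x₀.2 y₂) * DKa y₁
          * fderiv ℝ (H x₀.2) y₂ (Pi.single β 1) := by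
    have hrw : dirD2 (fun y => f (K x₀.1 y.1) (H x₀.2 y.2))
          ((Pi.single a 1 : Fin m → ℝ), (0 : Fin n → ℝ))
          ((0 : Fin m → ℝ), (Pi.single β 1 : Fin n → ℝ)) (y₁, y₂)
        = fderiv ℝ (fun z => fderiv ℝ (fun y => f (K x₀.1 y.1) (H x₀.2 y.2)) z
            ((Pi.single a 1 : Fin m → ℝ), (0 : Fin n → ℝ))) (y₁, y₂)
            ((0 : Fin m → ℝ), (Pi.single β 1 : Fin n → ℝ)) := rfl
    rw [hrw, hEv1.fderiv_eq, (h1.fun_mul h2).fderiv]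
    simp only [ContinuousLinearMap.add_apply, ContinuousLinearMap.smul_apply,
      ContinuousLinearMap.comp_apply, ContinuousLinearMap.prod_apply,
      ContinuousLinearMap.coe_fst', ContinuousLinearMap.coe_snd', smul_eq_mul,
      map_zero, mul_zero, zero_add]
    rw [show ((0:ℝ), fderiv ℝ (H x₀.2) y₂ (Pi.single β 1))
        = fderiv ℝ (H x₀.2) y₂ (Pi.single β 1) • ((0:ℝ), (1:ℝ)) by simp,
      map_smul, smul_eq_mul, ← auxPd f hfsm (hKpos _ _ hy₁) (hHpos _ _ hy₂)]
    ring
  -- ### Step 2: the mixed second derivative of Ric vanishes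
  have keyR : ∀ z : (Fin m → ℝ) × (Fin n → ℝ), z.1 ≠ 0 → z.2 ≠ 0 →
      fderiv ℝ (fun y => Ricbar x₀.1 y.1 + Rictil x₀.2 y.2) z
          ((Pi.single a 1 : Fin m → ℝ), (0 : Fin n → ℝ))
        = DRa z.1 := by
    intro z hz1 hz2
    have ha : HasFDerivAt (fun y : (Fin m → ℝ) × (Fin n → ℝ) => Ricbar x₀.1 y.1)
        ((fderiv ℝ (Ricbar x₀.1) z.1).comp (ContinuousLinearMap.fst ℝ _ _)) z :=
      ((hRbc z.1 hz1).differentiableAt (by simp)).hasFDerivAt.comp z hasFDerivAt_fst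
    have hb : HasFDerivAt (fun y : (Fin m → ℝ) × (Fin n → ℝ) => Rictil x₀.2 y.2)
        ((fderiv ℝ (Rictil x₀.2) z.2).comp (ContinuousLinearMap.snd ℝ _ _)) z :=
      ((hRtc z.2 hz2).differentiableAt (by simp)).hasFDerivAt.comp z hasFDerivAt_snd
    rw [(ha.fun_add hb).fderiv]
    simp only [ContinuousLinearMap.add_apply, ContinuousLinearMap.comp_apply,
      ContinuousLinearMap.coe_fst', ContinuousLinearMap.coe_snd', map_zero, add_zero,
      hDRadef]
  have hEvR : (fun z => fderiv ℝ (fun y => Ricbar x₀.1 y.1 + Rictil x₀.2 y.2) z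
        ((Pi.single a 1 : Fin m → ℝ), (0 : Fin n → ℝ)))
      =ᶠ[nhds (y₁, y₂)] fun z => DRa z.1 := by
    filter_upwards [hUmem] with z hz using keyR z hz.1 hz.2
  have hDRadiff : DifferentiableAt ℝ DRa y₁ :=
    (((hRbc y₁ hy₁).fderiv_right (m := 1) (WithTop.coe_le_coe.mpr le_top)).clm_apply contDiffAt_const).differentiableAt one_ne_zero
  have hRicd2 : dirD2 (fun y => Ricbar x₀.1 y.1 + Rictil x₀.2 y.2)
        ((Pi.single a 1 : Fin m → ℝ), (0 : Fin n → ℝ))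
        ((0 : Fin m → ℝ), (Pi.single β 1 : Fin n → ℝ)) (y₁, y₂) = 0 := by
    have hrw : dirD2 (fun y => Ricbar x₀.1 y.1 + Rictil x₀.2 y.2)
          ((Pi.single a 1 : Fin m → ℝ), (0 : Fin n → ℝ))
          ((0 : Fin m → ℝ), (Pi.single β 1 : Fin n → ℝ)) (y₁, y₂)
        = fderiv ℝ (fun z => fderiv ℝ (fun y => Ricbar x₀.1 y.1 + Rictil x₀.2 y.2) z
            ((Pi.single a 1 : Fin m → ℝ), (0 : Fin n → ℝ))) (y₁, y₂)
            ((0 : Fin m → ℝ), (Pi.single β 1 : Fin n → ℝ)) := rfl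
    rw [hrw, hEvR.fderiv_eq, auxCompFst DRa hDRadiff]
    simp
  -- ### Step 3: apply the Einstein equation
  have hE := hEinstein (Sum.inl a) (Sum.inr β) x₀ (y₁, y₂) hy₁ hy₂
  simp only [Sum.elim_inl, Sum.elim_inr] at hE
  rw [hRicd2, hF2d2] at hE
  have hm : (1:ℝ) ≤ (m:ℝ) := by exact_mod_cast a.pos
  have hn : (1:ℝ) ≤ (n:ℝ) := by exact_mod_cast β.pos
  have hc : ((m:ℝ) + n - 1) ≠ 0 := by
    have : (0:ℝ) < (m:ℝ) + n - 1 := by linarith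
    exact ne_of_gt this
  have hhalf : (1/2 : ℝ) ≠ 0 := by norm_num
  have hz : pd2 (pd1 f) (K x₀.1 y₁) (H x₀.2 y₂) * DKa y₁
      * fderiv ℝ (H x₀.2) y₂ (Pi.single β 1) = 0 := by
    have h : ((m:ℝ) + n - 1) * lam x₀ * (1/2 *
        (pd2 (pd1 f) (K x₀.1 y₁) (H x₀.2 y₂) * DKa y₁
          * fderiv ℝ (H x₀.2) y₂ (Pi.single β 1))) = 0 := by
      rw [← hE]; ring
    rcases mul_eq_zero.mp h with h' | h'
    · rcases mul_eq_zero.mp h' with h'' | h''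
      · exact absurd h'' hc
      · exact absurd h'' hlam
    · rcases mul_eq_zero.mp h' with h'' | h''
      · exact absurd h'' hhalf
      · exact h''
  simpa [dirD, hDKadef] using hz
end

section
/- If the Minkowskian product Finsler manifold (M,F) of (M̄,F̄) and (M̃,F̃) is Einstein with nonzero Einstein scalar λ(x) ≠ 0, then the product function satisfies f_{KH} ≡ 0, hence f(K,H) = aK + bH for positive constants a,b, and both (M̄, F̄) and (M̃, F̃) are Einstein with the same scalar function λ: Ric̄_{ab} = (n−1)λ G_{ab} and Ric̃_{αβ} = (n−1)λ G_{αβ}. -/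
open Set

section split
variable {E1 E2 : Type*} [NormedAddCommGroup E1] [NormedSpace ℝ E1]
  [NormedAddCommGroup E2] [NormedSpace ℝ E2]

lemma fderiv_split {g1 : E1 → ℝ} {g2 : E2 → ℝ} {z : E1 × E2}
    (h1 : DifferentiableAt ℝ g1 z.1) (h2 : DifferentiableAt ℝ g2 z.2) (v : E1 × E2) :
    fderiv ℝ (fun z : E1 × E2 => g1 z.1 + g2 z.2) z v
      = fderiv ℝ g1 z.1 v.1 + fderiv ℝ g2 z.2 v.2 := by
  have h : HasFDerivAt (fun z : E1 × E2 => g1 z.1 + g2 z.2)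
      ((fderiv ℝ g1 z.1).comp (ContinuousLinearMap.fst ℝ E1 E2)
        + (fderiv ℝ g2 z.2).comp (ContinuousLinearMap.snd ℝ E1 E2)) z :=
    (h1.hasFDerivAt.comp z (hasFDerivAt_fst)).add (h2.hasFDerivAt.comp z (hasFDerivAt_snd))
  rw [h.fderiv]; rfl

-- fderiv of g ∘ fst
lemma fderiv_comp_fst {g : E1 → ℝ} {z : E1 × E2} (h : DifferentiableAt ℝ g z.1)
    (v : E1 × E2) :
    fderiv ℝ (fun z : E1 × E2 => g z.1) z v = fderiv ℝ g z.1 v.1 := by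
  have h' : HasFDerivAt (fun z : E1 × E2 => g z.1)
      ((fderiv ℝ g z.1).comp (ContinuousLinearMap.fst ℝ E1 E2)) z :=
    h.hasFDerivAt.comp z hasFDerivAt_fst
  rw [h'.fderiv]; rfl

lemma fderiv_comp_snd {g : E2 → ℝ} {z : E1 × E2} (h : DifferentiableAt ℝ g z.2)
    (v : E1 × E2) :
    fderiv ℝ (fun z : E1 × E2 => g z.2) z v = fderiv ℝ g z.2 v.2 := by
  have h' : HasFDerivAt (fun z : E1 × E2 => g z.2)
      ((fderiv ℝ g z.2).comp (ContinuousLinearMap.snd ℝ E1 E2)) z :=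
    h.hasFDerivAt.comp z hasFDerivAt_snd
  rw [h'.fderiv]; rfl
end split

section D
variable {E : Type*} [NormedAddCommGroup E] [NormedSpace ℝ E]

lemma diff_fderiv_apply {g : E → ℝ} {U : Set E} (hU : IsOpen U)
    (hg : ContDiffOn ℝ (⊤ : ℕ∞) g U) {x : E} (hx : x ∈ U) (v : E) :
    DifferentiableAt ℝ (fun z => fderiv ℝ g z v) x := by
  have h1 : ContDiffAt ℝ (⊤ : ℕ∞) g x := hg.contDiffAt (hU.mem_nhds hx)
  have h2 : ContDiffAt ℝ (⊤ : ℕ∞) (fderiv ℝ g) x := h1.fderiv_right ((by simp))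
  exact (h2.clm_apply contDiffAt_const).differentiableAt (by simp)

lemma diffAt_of_contDiffOn {g : E → ℝ} {U : Set E} (hU : IsOpen U)
    (hg : ContDiffOn ℝ (⊤ : ℕ∞) g U) {x : E} (hx : x ∈ U) :
    DifferentiableAt ℝ g x :=
  (hg.contDiffAt (hU.mem_nhds hx)).differentiableAt (by simp)
end D

section split2
variable {E1 E2 : Type*} [NormedAddCommGroup E1] [NormedSpace ℝ E1]
  [NormedAddCommGroup E2] [NormedSpace ℝ E2]
  {g1 : E1 → ℝ} {g2 : E2 → ℝ} {U1 : Set E1} {U2 : Set E2}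

lemma dirD2_split (hU1 : IsOpen U1) (hU2 : IsOpen U2)
    (hg1 : ContDiffOn ℝ (⊤ : ℕ∞) g1 U1) (hg2 : ContDiffOn ℝ (⊤ : ℕ∞) g2 U2)
    {y : E1 × E2} (hy1 : y.1 ∈ U1) (hy2 : y.2 ∈ U2) (v w : E1 × E2) :
    dirD2 (fun z : E1 × E2 => g1 z.1 + g2 z.2) v w y
      = fderiv ℝ (fun z1 => fderiv ℝ g1 z1 v.1) y.1 w.1
        + fderiv ℝ (fun z2 => fderiv ℝ g2 z2 v.2) y.2 w.2 := by
  have hUo : IsOpen (U1 ×ˢ U2) := hU1.prod hU2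
  have hyU : y ∈ U1 ×ˢ U2 := ⟨hy1, hy2⟩
  have hev : (fun z : E1 × E2 => fderiv ℝ (fun z : E1 × E2 => g1 z.1 + g2 z.2) z v)
      =ᶠ[nhds y] (fun z => fderiv ℝ g1 z.1 v.1 + fderiv ℝ g2 z.2 v.2) := by
    filter_upwards [hUo.mem_nhds hyU] with z hz
    exact fderiv_split (diffAt_of_contDiffOn hU1 hg1 hz.1)
      (diffAt_of_contDiffOn hU2 hg2 hz.2) v
  have : dirD2 (fun z : E1 × E2 => g1 z.1 + g2 z.2) v w y
      = fderiv ℝ (fun z => fderiv ℝ g1 z.1 v.1 + fderiv ℝ g2 z.2 v.2) y w := by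
    show fderiv ℝ (fun z => fderiv ℝ (fun z : E1 × E2 => g1 z.1 + g2 z.2) z v) y w = _
    rw [hev.fderiv_eq]
  rw [this]
  exact fderiv_split (diff_fderiv_apply hU1 hg1 hy1 v.1)
    (diff_fderiv_apply hU2 hg2 hy2 v.2) w

lemma dirD2_split_inl (hU1 : IsOpen U1) (hU2 : IsOpen U2)
    (hg1 : ContDiffOn ℝ (⊤ : ℕ∞) g1 U1) (hg2 : ContDiffOn ℝ (⊤ : ℕ∞) g2 U2)
    {y : E1 × E2} (hy1 : y.1 ∈ U1) (hy2 : y.2 ∈ U2) (v1 : E1) (w : E1 × E2) :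
    dirD2 (fun z : E1 × E2 => g1 z.1 + g2 z.2) (v1, 0) w y = dirD2 g1 v1 w.1 y.1 := by
  rw [dirD2_split hU1 hU2 hg1 hg2 hy1 hy2]
  have : (fun z2 => fderiv ℝ g2 z2 ((v1, (0:E2)).2)) = fun _ => (0:ℝ) := by
    funext z2; simp
  rw [this]
  simp only [fderiv_const, fderiv_const_apply, Pi.zero_apply, ContinuousLinearMap.zero_apply, add_zero]
  rfl

lemma dirD2_split_inr (hU1 : IsOpen U1) (hU2 : IsOpen U2)
    (hg1 : ContDiffOn ℝ (⊤ : ℕ∞) g1 U1) (hg2 : ContDiffOn ℝ (⊤ : ℕ∞) g2 U2)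
    {y : E1 × E2} (hy1 : y.1 ∈ U1) (hy2 : y.2 ∈ U2) (v2 : E2) (w : E1 × E2) :
    dirD2 (fun z : E1 × E2 => g1 z.1 + g2 z.2) (0, v2) w y = dirD2 g2 v2 w.2 y.2 := by
  rw [dirD2_split hU1 hU2 hg1 hg2 hy1 hy2]
  have : (fun z1 => fderiv ℝ g1 z1 (((0:E1), v2).1)) = fun _ => (0:ℝ) := by
    funext z1; simp
  rw [this]
  simp only [fderiv_const, fderiv_const_apply, Pi.zero_apply, ContinuousLinearMap.zero_apply, zero_add]
  rfl
end split2

lemma clm_eval (L : ℝ × ℝ →L[ℝ] ℝ) (a b : ℝ) : L (a, b) = a * L (1, 0) + b * L (0, 1) := by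
  have h : (a, b) = a • ((1:ℝ), (0:ℝ)) + b • ((0:ℝ), (1:ℝ)) := by
    simp [Prod.ext_iff]
  rw [h, map_add, map_smul, map_smul]; simp [smul_eq_mul]

section chain
variable {E1 E2 : Type*} [NormedAddCommGroup E1] [NormedSpace ℝ E1]
  [NormedAddCommGroup E2] [NormedSpace ℝ E2]
  {f2 : ℝ × ℝ → ℝ} {K : E1 → ℝ} {H : E2 → ℝ} {U1 : Set E1} {U2 : Set E2}

lemma chain_fderiv (hf2 : ContDiffOn ℝ (⊤ : ℕ∞) f2 (Ioi 0 ×ˢ Ioi 0))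
    (hU1 : IsOpen U1) (hU2 : IsOpen U2)
    (hK : ContDiffOn ℝ (⊤ : ℕ∞) K U1) (hH : ContDiffOn ℝ (⊤ : ℕ∞) H U2)
    (hKpos : ∀ z ∈ U1, 0 < K z) (hHpos : ∀ z ∈ U2, 0 < H z)
    {z : E1 × E2} (hz1 : z.1 ∈ U1) (hz2 : z.2 ∈ U2) (v : E1 × E2) :
    fderiv ℝ (fun z : E1 × E2 => f2 (K z.1, H z.2)) z v
      = fderiv ℝ f2 (K z.1, H z.2) (1, 0) * fderiv ℝ K z.1 v.1
        + fderiv ℝ f2 (K z.1, H z.2) (0, 1) * fderiv ℝ H z.2 v.2 := by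
  have hKd : DifferentiableAt ℝ K z.1 := diffAt_of_contDiffOn hU1 hK hz1
  have hHd : DifferentiableAt ℝ H z.2 := diffAt_of_contDiffOn hU2 hH hz2
  have hQ : IsOpen ((Ioi (0:ℝ)) ×ˢ (Ioi (0:ℝ))) := isOpen_Ioi.prod isOpen_Ioi
  have hpQ : (K z.1, H z.2) ∈ (Ioi (0:ℝ)) ×ˢ (Ioi (0:ℝ)) := ⟨hKpos _ hz1, hHpos _ hz2⟩
  have hf2d : DifferentiableAt ℝ f2 (K z.1, H z.2) :=
    (hf2.contDiffAt (hQ.mem_nhds hpQ)).differentiableAt (by simp)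
  have hφ : HasFDerivAt (fun z : E1 × E2 => (K z.1, H z.2))
      (((fderiv ℝ K z.1).comp (ContinuousLinearMap.fst ℝ E1 E2)).prod
        ((fderiv ℝ H z.2).comp (ContinuousLinearMap.snd ℝ E1 E2))) z :=
    HasFDerivAt.prodMk (hKd.hasFDerivAt.comp z hasFDerivAt_fst) (hHd.hasFDerivAt.comp z hasFDerivAt_snd)
  have h := (hf2d.hasFDerivAt.comp z hφ).fderiv
  have e0 : fderiv ℝ (fun z : E1 × E2 => f2 (K z.1, H z.2)) z
      = fderiv ℝ (f2 ∘ fun z : E1 × E2 => (K z.1, H z.2)) z := rfl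
  have : fderiv ℝ (fun z : E1 × E2 => f2 (K z.1, H z.2)) z v
      = fderiv ℝ f2 (K z.1, H z.2) (fderiv ℝ K z.1 v.1, fderiv ℝ H z.2 v.2) := by
    rw [e0, h]; rfl
  rw [this, clm_eval]; ring

lemma chain_mixed (hf2 : ContDiffOn ℝ (⊤ : ℕ∞) f2 (Ioi 0 ×ˢ Ioi 0))
    (hU1 : IsOpen U1) (hU2 : IsOpen U2)
    (hK : ContDiffOn ℝ (⊤ : ℕ∞) K U1) (hH : ContDiffOn ℝ (⊤ : ℕ∞) H U2)
    (hKpos : ∀ z ∈ U1, 0 < K z) (hHpos : ∀ z ∈ U2, 0 < H z)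
    {y : E1 × E2} (hy1 : y.1 ∈ U1) (hy2 : y.2 ∈ U2) (v1 : E1) (w2 : E2) :
    dirD2 (fun z : E1 × E2 => f2 (K z.1, H z.2)) (v1, 0) (0, w2) y
      = fderiv ℝ (fun q => fderiv ℝ f2 q (1, 0)) (K y.1, H y.2) (0, 1)
        * fderiv ℝ K y.1 v1 * fderiv ℝ H y.2 w2 := by
  have hQ : IsOpen ((Ioi (0:ℝ)) ×ˢ (Ioi (0:ℝ))) := isOpen_Ioi.prod isOpen_Ioi
  have hUo : IsOpen (U1 ×ˢ U2) := hU1.prod hU2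
  have hyU : y ∈ U1 ×ˢ U2 := ⟨hy1, hy2⟩
  have hpQ : (K y.1, H y.2) ∈ (Ioi (0:ℝ)) ×ˢ (Ioi (0:ℝ)) := ⟨hKpos _ hy1, hHpos _ hy2⟩
  -- first derivative eventually equals the chain-rule expression
  have hev : (fun z : E1 × E2 => fderiv ℝ (fun z : E1 × E2 => f2 (K z.1, H z.2)) z (v1, 0))
      =ᶠ[nhds y] (fun z => fderiv ℝ f2 (K z.1, H z.2) (1, 0) * fderiv ℝ K z.1 v1) := by
    filter_upwards [hUo.mem_nhds hyU] with z hz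
    rw [chain_fderiv hf2 hU1 hU2 hK hH hKpos hHpos hz.1 hz.2]
    simp
  have hstep : dirD2 (fun z : E1 × E2 => f2 (K z.1, H z.2)) (v1, 0) (0, w2) y
      = fderiv ℝ (fun z : E1 × E2 =>
          fderiv ℝ f2 (K z.1, H z.2) (1, 0) * fderiv ℝ K z.1 v1) y (0, w2) := by
    show fderiv ℝ (fun z : E1 × E2 =>
      fderiv ℝ (fun z : E1 × E2 => f2 (K z.1, H z.2)) z (v1, 0)) y (0, w2) = _
    rw [hev.fderiv_eq]
  rw [hstep]
  -- differentiability of the two factors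
  have hKd : DifferentiableAt ℝ K y.1 := diffAt_of_contDiffOn hU1 hK hy1
  have hHd : DifferentiableAt ℝ H y.2 := diffAt_of_contDiffOn hU2 hH hy2
  have hφd : DifferentiableAt ℝ (fun z : E1 × E2 => (K z.1, H z.2)) y :=
    (DifferentiableAt.prodMk (hKd.comp y differentiableAt_fst) (hHd.comp y differentiableAt_snd))
  have hD1d : DifferentiableAt ℝ (fun q => fderiv ℝ f2 q (1, 0)) (K y.1, H y.2) :=
    diff_fderiv_apply hQ hf2 hpQ (1, 0)
  have hA : DifferentiableAt ℝ (fun z : E1 × E2 => fderiv ℝ f2 (K z.1, H z.2) (1, 0)) y :=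
    DifferentiableAt.comp (g := fun q => fderiv ℝ f2 q (1, 0)) y hD1d hφd
  have hB : DifferentiableAt ℝ (fun z : E1 × E2 => fderiv ℝ K z.1 v1) y :=
    (diff_fderiv_apply hU1 hK hy1 v1).comp y differentiableAt_fst
  rw [fderiv_fun_mul hA hB]
  have hBz : fderiv ℝ (fun z : E1 × E2 => fderiv ℝ K z.1 v1) y ((0:E1), w2) = 0 := by
    rw [fderiv_comp_fst (diff_fderiv_apply hU1 hK hy1 v1)]
    simp
  have hφ' : HasFDerivAt (fun z : E1 × E2 => (K z.1, H z.2))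
      (((fderiv ℝ K y.1).comp (ContinuousLinearMap.fst ℝ E1 E2)).prod
        ((fderiv ℝ H y.2).comp (ContinuousLinearMap.snd ℝ E1 E2))) y :=
    HasFDerivAt.prodMk (hKd.hasFDerivAt.comp y hasFDerivAt_fst) (hHd.hasFDerivAt.comp y hasFDerivAt_snd)
  have hAz : fderiv ℝ (fun z : E1 × E2 => fderiv ℝ f2 (K z.1, H z.2) (1, 0)) y ((0:E1), w2)
      = fderiv ℝ (fun q => fderiv ℝ f2 q (1, 0)) (K y.1, H y.2) (0, fderiv ℝ H y.2 w2) := by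
    have e0 : fderiv ℝ (fun z : E1 × E2 => fderiv ℝ f2 (K z.1, H z.2) (1, 0)) y
        = fderiv ℝ ((fun q => fderiv ℝ f2 q (1, 0)) ∘ fun z : E1 × E2 => (K z.1, H z.2)) y := rfl
    rw [e0, (hD1d.hasFDerivAt.comp y hφ').fderiv]
    simp
  have hscal : fderiv ℝ (fun q => fderiv ℝ f2 q (1, 0)) (K y.1, H y.2) (0, fderiv ℝ H y.2 w2)
      = fderiv ℝ H y.2 w2 * fderiv ℝ (fun q => fderiv ℝ f2 q (1, 0)) (K y.1, H y.2) (0, 1) := by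
    rw [clm_eval]; ring
  simp only [ContinuousLinearMap.add_apply, ContinuousLinearMap.smul_apply, hBz, hAz, hscal]
  simp [smul_eq_mul]; ring
end chain

section pd
variable {f : ℝ → ℝ → ℝ}

lemma pd1_eq (hf2 : ContDiffOn ℝ (⊤ : ℕ∞) (fun p : ℝ × ℝ => f p.1 p.2) (Ioi 0 ×ˢ Ioi 0))
    {s t : ℝ} (hs : 0 < s) (ht : 0 < t) :
    pd1 f s t = fderiv ℝ (fun p : ℝ × ℝ => f p.1 p.2) (s, t) (1, 0) := by
  have hQ : IsOpen ((Ioi (0:ℝ)) ×ˢ (Ioi (0:ℝ))) := isOpen_Ioi.prod isOpen_Ioi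
  have hd : DifferentiableAt ℝ (fun p : ℝ × ℝ => f p.1 p.2) (s, t) :=
    (hf2.contDiffAt (hQ.mem_nhds ⟨mem_Ioi.mpr hs, mem_Ioi.mpr ht⟩)).differentiableAt (by simp)
  have hu : HasDerivAt (fun u : ℝ => (u, t)) ((1:ℝ), (0:ℝ)) s :=
    HasDerivAt.prodMk (hasDerivAt_id s) (hasDerivAt_const s t)
  exact (hd.hasFDerivAt.comp_hasDerivAt s hu).deriv

lemma pd2_eq (hf2 : ContDiffOn ℝ (⊤ : ℕ∞) (fun p : ℝ × ℝ => f p.1 p.2) (Ioi 0 ×ˢ Ioi 0))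
    {s t : ℝ} (hs : 0 < s) (ht : 0 < t) :
    pd2 f s t = fderiv ℝ (fun p : ℝ × ℝ => f p.1 p.2) (s, t) (0, 1) := by
  have hQ : IsOpen ((Ioi (0:ℝ)) ×ˢ (Ioi (0:ℝ))) := isOpen_Ioi.prod isOpen_Ioi
  have hd : DifferentiableAt ℝ (fun p : ℝ × ℝ => f p.1 p.2) (s, t) :=
    (hf2.contDiffAt (hQ.mem_nhds ⟨mem_Ioi.mpr hs, mem_Ioi.mpr ht⟩)).differentiableAt (by simp)
  have hu : HasDerivAt (fun u : ℝ => (s, u)) ((0:ℝ), (1:ℝ)) t :=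
    HasDerivAt.prodMk (hasDerivAt_const t s) (hasDerivAt_id t)
  exact (hd.hasFDerivAt.comp_hasDerivAt t hu).deriv

lemma pd21_eq (hf2 : ContDiffOn ℝ (⊤ : ℕ∞) (fun p : ℝ × ℝ => f p.1 p.2) (Ioi 0 ×ˢ Ioi 0))
    {s t : ℝ} (hs : 0 < s) (ht : 0 < t) :
    pd2 (pd1 f) s t
      = fderiv ℝ (fun q : ℝ × ℝ =>
          fderiv ℝ (fun p : ℝ × ℝ => f p.1 p.2) q (1, 0)) (s, t) (0, 1) := by
  have hQ : IsOpen ((Ioi (0:ℝ)) ×ˢ (Ioi (0:ℝ))) := isOpen_Ioi.prod isOpen_Ioi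
  have hev : (fun u => pd1 f s u)
      =ᶠ[nhds t] (fun u => fderiv ℝ (fun p : ℝ × ℝ => f p.1 p.2) (s, u) (1, 0)) := by
    filter_upwards [isOpen_Ioi.mem_nhds ht] with u hu
    exact pd1_eq hf2 hs hu
  have h1 : pd2 (pd1 f) s t
      = deriv (fun u => fderiv ℝ (fun p : ℝ × ℝ => f p.1 p.2) (s, u) (1, 0)) t := by
    show deriv (fun u => pd1 f s u) t = _
    exact hev.deriv_eq
  rw [h1]
  have hd : DifferentiableAt ℝ (fun q : ℝ × ℝ =>
      fderiv ℝ (fun p : ℝ × ℝ => f p.1 p.2) q (1, 0)) (s, t) :=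
    diff_fderiv_apply hQ hf2 ⟨mem_Ioi.mpr hs, mem_Ioi.mpr ht⟩ (1, 0)
  have hu : HasDerivAt (fun u : ℝ => (s, u)) ((0:ℝ), (1:ℝ)) t :=
    HasDerivAt.prodMk (hasDerivAt_const t s) (hasDerivAt_id t)
  exact (hd.hasFDerivAt.comp_hasDerivAt t hu).deriv
end pd

section euler
variable {E : Type*} [NormedAddCommGroup E] [NormedSpace ℝ E]

/-- Euler's theorem for positively `2`-homogeneous functions. -/
lemma euler2 {g : E → ℝ} {U : Set E} (hU : IsOpen U) (hg : ContDiffOn ℝ (⊤ : ℕ∞) g U)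
    {y : E} (hy : y ∈ U) (hom : ∀ c : ℝ, 0 < c → g (c • y) = c ^ 2 * g y) :
    fderiv ℝ g y y = 2 * g y := by
  have hgd : DifferentiableAt ℝ g y := diffAt_of_contDiffOn hU hg hy
  have h1 : HasDerivAt (fun c : ℝ => c • y) ((1:ℝ) • y) 1 := (hasDerivAt_id 1).smul_const y
  have hgd' : HasFDerivAt g (fderiv ℝ g y) ((1:ℝ) • y) := by
    rw [one_smul]; exact hgd.hasFDerivAt
  have h2 : HasDerivAt (fun c : ℝ => g (c • y)) (fderiv ℝ g y ((1:ℝ) • y)) 1 :=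
    hgd'.comp_hasDerivAt 1 h1
  have h3 : HasDerivAt (fun c : ℝ => c ^ 2 * g y) (2 * g y) 1 := by
    have := (hasDerivAt_pow 2 (1:ℝ)).mul_const (g y)
    simpa using this
  have hev : (fun c : ℝ => g (c • y)) =ᶠ[nhds 1] (fun c : ℝ => c ^ 2 * g y) := by
    filter_upwards [isOpen_Ioi.mem_nhds (show (1:ℝ) ∈ Ioi 0 from mem_Ioi.mpr zero_lt_one)] with c hc
    exact hom c hc
  have h4 : HasDerivAt (fun c : ℝ => g (c • y)) (2 * g y) 1 :=
    h3.congr_of_eventuallyEq hev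
  have := h2.unique h4
  rwa [one_smul] at this

/-- Euler's theorem for positively `1`-homogeneous functions on the quadrant. -/
lemma euler1 {g : ℝ × ℝ → ℝ} (hg : ContDiffOn ℝ (⊤ : ℕ∞) g (Ioi 0 ×ˢ Ioi 0))
    {p : ℝ × ℝ} (hp : p ∈ (Ioi (0:ℝ)) ×ˢ (Ioi (0:ℝ)))
    (hom : ∀ c : ℝ, 0 < c → g (c • p) = c * g p) :
    fderiv ℝ g p p = g p := by
  have hQ : IsOpen ((Ioi (0:ℝ)) ×ˢ (Ioi (0:ℝ))) := isOpen_Ioi.prod isOpen_Ioi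
  have hgd : DifferentiableAt ℝ g p := (hg.contDiffAt (hQ.mem_nhds hp)).differentiableAt (by simp)
  have h1 : HasDerivAt (fun c : ℝ => c • p) ((1:ℝ) • p) 1 := (hasDerivAt_id 1).smul_const p
  have hgd' : HasFDerivAt g (fderiv ℝ g p) ((1:ℝ) • p) := by
    rw [one_smul]; exact hgd.hasFDerivAt
  have h2 : HasDerivAt (fun c : ℝ => g (c • p)) (fderiv ℝ g p ((1:ℝ) • p)) 1 :=
    hgd'.comp_hasDerivAt 1 h1
  have h3 : HasDerivAt (fun c : ℝ => c * g p) (g p) 1 := by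
    simpa using (hasDerivAt_id (1:ℝ)).mul_const (g p)
  have hev : (fun c : ℝ => g (c • p)) =ᶠ[nhds 1] (fun c : ℝ => c * g p) := by
    filter_upwards [isOpen_Ioi.mem_nhds (show (1:ℝ) ∈ Ioi 0 from mem_Ioi.mpr zero_lt_one)] with c hc
    exact hom c hc
  have h4 : HasDerivAt (fun c : ℝ => g (c • p)) (g p) 1 := h3.congr_of_eventuallyEq hev
  have := h2.unique h4
  rwa [one_smul] at this
end euler

/-- The gradient of a positively 1-homogeneous function is 0-homogeneous. -/
lemma fderiv_hom_zero {g : ℝ × ℝ → ℝ} (hg : ContDiffOn ℝ (⊤ : ℕ∞) g (Ioi 0 ×ˢ Ioi 0))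
    (hom : ∀ (l : ℝ) q, 0 < l → q ∈ (Ioi (0:ℝ)) ×ˢ (Ioi (0:ℝ)) → g (l • q) = l * g q)
    {p : ℝ × ℝ} (hp : p ∈ (Ioi (0:ℝ)) ×ˢ (Ioi (0:ℝ))) {l : ℝ} (hl : 0 < l) (v : ℝ × ℝ) :
    fderiv ℝ g (l • p) v = fderiv ℝ g p v := by
  have hQ : IsOpen ((Ioi (0:ℝ)) ×ˢ (Ioi (0:ℝ))) := isOpen_Ioi.prod isOpen_Ioi
  have hlp : l • p ∈ (Ioi (0:ℝ)) ×ˢ (Ioi (0:ℝ)) :=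
    ⟨by simpa using mul_pos hl hp.1, by simpa using mul_pos hl hp.2⟩
  have hgd : DifferentiableAt ℝ g (l • p) :=
    (hg.contDiffAt (hQ.mem_nhds hlp)).differentiableAt (by simp)
  have hgp : DifferentiableAt ℝ g p :=
    (hg.contDiffAt (hQ.mem_nhds hp)).differentiableAt (by simp)
  have hsm : HasFDerivAt (fun q : ℝ × ℝ => l • q)
      (l • ContinuousLinearMap.id ℝ (ℝ × ℝ)) p := (hasFDerivAt_id p).const_smul l
  have h1 : HasFDerivAt (fun q : ℝ × ℝ => g (l • q))
      ((fderiv ℝ g (l • p)).comp (l • ContinuousLinearMap.id ℝ (ℝ × ℝ))) p :=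
    hgd.hasFDerivAt.comp p hsm
  have h2 : HasFDerivAt (fun q : ℝ × ℝ => l * g q) (l • fderiv ℝ g p) p :=
    hgp.hasFDerivAt.const_smul l
  have hev : (fun q : ℝ × ℝ => g (l • q)) =ᶠ[nhds p] (fun q : ℝ × ℝ => l * g q) := by
    filter_upwards [hQ.mem_nhds hp] with q hq
    exact hom l q hl hq
  have h3 : HasFDerivAt (fun q : ℝ × ℝ => g (l • q)) (l • fderiv ℝ g p) p :=
    h2.congr_of_eventuallyEq hev
  have huniq := h1.unique h3
  have happ := congrArg (fun L : (ℝ × ℝ) →L[ℝ] ℝ => L v) huniq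
  simp only [ContinuousLinearMap.comp_apply, ContinuousLinearMap.smul_apply,
    ContinuousLinearMap.coe_smul', Pi.smul_apply, ContinuousLinearMap.id_apply] at happ
  have : fderiv ℝ g (l • p) (l • v) = l * fderiv ℝ g p v := by
    simpa [smul_eq_mul] using happ
  rw [map_smul] at this
  have hl' : l ≠ 0 := ne_of_gt hl
  exact mul_left_cancel₀ hl' (by simpa [smul_eq_mul] using this)

/-- A function on the quadrant whose `t`-partial vanishes is constant in `t`. -/
lemma const_in_snd {D : ℝ × ℝ → ℝ}
    (hDdiff : ∀ q ∈ (Ioi (0:ℝ)) ×ˢ (Ioi (0:ℝ)), DifferentiableAt ℝ D q)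
    (hD : ∀ q ∈ (Ioi (0:ℝ)) ×ˢ (Ioi (0:ℝ)), fderiv ℝ D q (0, 1) = 0)
    {s t t' : ℝ} (hs : 0 < s) (ht : 0 < t) (ht' : 0 < t') :
    D (s, t) = D (s, t') := by
  have hconv : Convex ℝ (Ioi (0:ℝ)) := convex_Ioi 0
  have hmem : ∀ u ∈ Ioi (0:ℝ), ((s, u) : ℝ × ℝ) ∈ (Ioi (0:ℝ)) ×ˢ (Ioi (0:ℝ)) :=
    fun u hu => ⟨mem_Ioi.mpr hs, hu⟩
  have hdiff : ∀ u ∈ Ioi (0:ℝ), DifferentiableAt ℝ (fun u : ℝ => D (s, u)) u := by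
    intro u hu
    exact (hDdiff _ (hmem u hu)).comp u (DifferentiableAt.prodMk (differentiableAt_const s) differentiableAt_id)
  have hz : ∀ u ∈ Ioi (0:ℝ), fderivWithin ℝ (fun u : ℝ => D (s, u)) (Ioi 0) u = 0 := by
    intro u hu
    rw [fderivWithin_of_isOpen isOpen_Ioi hu]
    apply ContinuousLinearMap.ext_ring
    have hder : HasDerivAt (fun u : ℝ => D (s, u)) (fderiv ℝ D (s, u) (0, 1)) u :=
      ((hDdiff _ (hmem u hu)).hasFDerivAt).comp_hasDerivAt u
        (HasDerivAt.prodMk (hasDerivAt_const u s) (hasDerivAt_id u))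
    have := hder.deriv
    rw [hD _ (hmem u hu)] at this
    simp only [ContinuousLinearMap.zero_apply]
    rw [fderiv_apply_one_eq_deriv]
    exact this
  exact hconv.is_const_of_fderivWithin_eq_zero
    (fun u hu => (hdiff u hu).differentiableWithinAt) hz (mem_Ioi.mpr ht) (mem_Ioi.mpr ht')

lemma lin_of_D12 {f : ℝ → ℝ → ℝ}
    (hfsm : ContDiffOn ℝ (⊤ : ℕ∞) (fun p : ℝ × ℝ => f p.1 p.2) (Ioi 0 ×ˢ Ioi 0))
    (hfnonneg : ∀ s t : ℝ, 0 ≤ s → 0 ≤ t → 0 ≤ f s t)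
    (hfhom : ∀ l s t : ℝ, 0 ≤ l → 0 ≤ s → 0 ≤ t → f (l * s) (l * t) = l * f s t)
    (hfs : pd1 f 1 1 ≠ 0) (hft : pd2 f 1 1 ≠ 0)
    (hD12 : ∀ s t : ℝ, 0 < s → 0 < t →
      fderiv ℝ (fun q : ℝ × ℝ =>
        fderiv ℝ (fun p : ℝ × ℝ => f p.1 p.2) q (1, 0)) (s, t) (0, 1) = 0) :
    ∃ a b : ℝ, 0 < a ∧ 0 < b ∧ ∀ s t : ℝ, 0 < s → 0 < t → f s t = a * s + b * t := by
  set f2 : ℝ × ℝ → ℝ := fun p => f p.1 p.2 with hf2def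
  set D1 : ℝ × ℝ → ℝ := fun q => fderiv ℝ f2 q (1, 0) with hD1def
  have hQ : IsOpen ((Ioi (0:ℝ)) ×ˢ (Ioi (0:ℝ))) := isOpen_Ioi.prod isOpen_Ioi
  have hom' : ∀ (l : ℝ) q, 0 < l → q ∈ (Ioi (0:ℝ)) ×ˢ (Ioi (0:ℝ)) → f2 (l • q) = l * f2 q := by
    intro l q hl hq
    have h : (l • q : ℝ × ℝ) = (l * q.1, l * q.2) := by
      simp [Prod.ext_iff, smul_eq_mul]
    rw [h]
    exact hfhom l q.1 q.2 hl.le (le_of_lt hq.1) (le_of_lt hq.2)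
  have hD1diff : ∀ q ∈ (Ioi (0:ℝ)) ×ˢ (Ioi (0:ℝ)), DifferentiableAt ℝ D1 q :=
    fun q hq => diff_fderiv_apply hQ hfsm hq (1, 0)
  have hconst2 : ∀ s t t' : ℝ, 0 < s → 0 < t → 0 < t' → D1 (s, t) = D1 (s, t') := by
    intro s t t' hs ht ht'
    exact const_in_snd hD1diff
      (fun q hq => by simpa using hD12 q.1 q.2 hq.1 hq.2) hs ht ht'
  set a : ℝ := D1 (1, 1) with ha_def
  have hD1a : ∀ s t : ℝ, 0 < s → 0 < t → D1 (s, t) = a := by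
    intro s t hs ht
    have h1 : D1 (s, t) = D1 (s, 1) := hconst2 s t 1 hs ht one_pos
    have hsp : ((1:ℝ), 1/s) ∈ (Ioi (0:ℝ)) ×ˢ (Ioi (0:ℝ)) :=
      ⟨mem_Ioi.mpr one_pos, mem_Ioi.mpr (by positivity)⟩
    have h2 : (s • ((1:ℝ), 1/s) : ℝ × ℝ) = (s, 1) := by
      simp [Prod.ext_iff, smul_eq_mul]
      field_simp
    have h3 : D1 (s, 1) = D1 (1, 1/s) := by
      rw [← h2]
      exact fderiv_hom_zero hfsm hom' hsp hs (1, 0)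
    rw [h1, h3, hconst2 1 (1/s) 1 one_pos (by positivity) one_pos]
  set b : ℝ := f 1 1 - a with hb_def
  -- f (s, 1) = a s + b
  have hline : ∀ s : ℝ, 0 < s → f s 1 = a * s + b := by
    intro s hs
    have hconv : Convex ℝ (Ioi (0:ℝ)) := convex_Ioi 0
    have hup : ∀ u ∈ Ioi (0:ℝ), HasDerivAt (fun u : ℝ => f2 (u, 1) - a * u)
        (D1 (u, 1) - a) u := by
      intro u hu
      have hd : DifferentiableAt ℝ f2 (u, 1) :=
        (hfsm.contDiffAt (hQ.mem_nhds ⟨hu, mem_Ioi.mpr one_pos⟩)).differentiableAt (by simp)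
      have h1 : HasDerivAt (fun u : ℝ => f2 (u, 1)) (fderiv ℝ f2 (u, 1) (1, 0)) u :=
        HasFDerivAt.comp_hasDerivAt (l := f2) u hd.hasFDerivAt (HasDerivAt.prodMk (hasDerivAt_id' u) (hasDerivAt_const u (1:ℝ)))
      have h2 : HasDerivAt (fun u : ℝ => a * u) a u := by
        simpa using (hasDerivAt_id u).const_mul a
      exact h1.sub h2
    have hzero : ∀ u ∈ Ioi (0:ℝ),
        fderivWithin ℝ (fun u : ℝ => f2 (u, 1) - a * u) (Ioi 0) u = 0 := by
      intro u hu
      rw [fderivWithin_of_isOpen isOpen_Ioi hu]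
      apply ContinuousLinearMap.ext_ring
      simp only [ContinuousLinearMap.zero_apply]
      rw [fderiv_apply_one_eq_deriv, (hup u hu).deriv, hD1a u 1 hu one_pos, sub_self]
    have := hconv.is_const_of_fderivWithin_eq_zero
      (fun u hu => ((hup u hu).differentiableAt).differentiableWithinAt) hzero
      (mem_Ioi.mpr hs) (mem_Ioi.mpr one_pos)
    have h2 : f s 1 - a * s = f 1 1 - a * 1 := this
    have : f s 1 = a * s + (f 1 1 - a) := by linarith
    simpa [hb_def] using this
  -- full linearity
  have hmain : ∀ s t : ℝ, 0 < s → 0 < t → f s t = a * s + b * t := by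
    intro s t hs ht
    have h1 : f (t * (s / t)) (t * 1) = t * f (s / t) 1 :=
      hfhom t (s / t) 1 ht.le (by positivity) zero_le_one
    have h2 : t * (s / t) = s := by field_simp
    rw [h2, mul_one, hline (s / t) (by positivity)] at h1
    rw [h1]; field_simp
  -- identify a and b with the partials at (1,1)
  have haval : pd1 f 1 1 = a := by
    rw [pd1_eq hfsm one_pos one_pos]
  have ha_ne : a ≠ 0 := haval ▸ hfs
  have hbval : pd2 f 1 1 = b := by
    rw [pd2_eq hfsm one_pos one_pos]
    have heuler : fderiv ℝ f2 (1, 1) (1, 1) = f2 (1, 1) :=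
      euler1 hfsm ⟨mem_Ioi.mpr one_pos, mem_Ioi.mpr one_pos⟩
        (fun c hc => hom' c (1, 1) hc ⟨mem_Ioi.mpr one_pos, mem_Ioi.mpr one_pos⟩)
    have hce := clm_eval (fderiv ℝ f2 (1, 1)) 1 1
    rw [heuler] at hce
    have : f2 (1, 1) = D1 (1, 1) + fderiv ℝ f2 (1, 1) (0, 1) := by
      simpa using hce
    have hb2 : fderiv ℝ f2 (1, 1) (0, 1) = f 1 1 - a := by
      simp only [hf2def] at this ⊢
      linarith [this]
    rw [hb2]
  have hb_ne : b ≠ 0 := hbval ▸ hft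
  -- positivity of a
  have ha_pos : 0 < a := by
    rcases lt_or_gt_of_ne ha_ne with hneg | hpos
    · exfalso
      set s₀ : ℝ := (|b| + 1) / (-a) with hs₀
      have hs₀pos : 0 < s₀ := by
        apply div_pos (by positivity) (by linarith)
      have h1 : f s₀ 1 = a * s₀ + b := hline s₀ hs₀pos
      have h2 : 0 ≤ f s₀ 1 := hfnonneg s₀ 1 hs₀pos.le zero_le_one
      have h3 : a * s₀ = -(|b| + 1) := by
        rw [hs₀, mul_div_assoc']; rw [div_eq_iff (neg_ne_zero.mpr ha_ne)]; ring
      have h4 : b ≤ |b| := le_abs_self b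
      rw [h1, h3] at h2; linarith
    · exact hpos
  have hb_pos : 0 < b := by
    rcases lt_or_gt_of_ne hb_ne with hneg | hpos
    · exfalso
      set t₀ : ℝ := (|a| + 1) / (-b) with ht₀
      have ht₀pos : 0 < t₀ := div_pos (by positivity) (by linarith)
      have h1 : f 1 t₀ = a * 1 + b * t₀ := hmain 1 t₀ one_pos ht₀pos
      have h2 : 0 ≤ f 1 t₀ := hfnonneg 1 t₀ zero_le_one ht₀pos.le
      have h3 : b * t₀ = -(|a| + 1) := by
        rw [ht₀, mul_div_assoc']; rw [div_eq_iff (neg_ne_zero.mpr hb_ne)]; ring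
      have h4 : a ≤ |a| := le_abs_self a
      rw [h1, h3] at h2; linarith
    · exact hpos
  exact ⟨a, b, ha_pos, hb_pos, hmain⟩

lemma exists_basis_dir {m : ℕ} {g : (Fin m → ℝ) → ℝ} {y : Fin m → ℝ}
    (hy : y ≠ 0) (hg : ContDiffOn ℝ (⊤ : ℕ∞) g {z : Fin m → ℝ | z ≠ 0}) (hgpos : 0 < g y)
    (hom : ∀ c : ℝ, 0 < c → g (c • y) = c ^ 2 * g y) :
    ∃ a : Fin m, fderiv ℝ g y (Pi.single a 1) ≠ 0 := by
  have hU : IsOpen {z : Fin m → ℝ | z ≠ 0} := isOpen_ne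
  have heuler : fderiv ℝ g y y = 2 * g y := euler2 hU hg hy hom
  by_contra hcon
  push_neg at hcon
  have heq : y = ∑ i, y i • (Pi.single i 1 : Fin m → ℝ) := by
    funext j
    simp [Finset.sum_apply, Pi.single_apply, Finset.sum_ite_eq]
  have : fderiv ℝ g y y = 0 := by
    have h2 : fderiv ℝ g y y = fderiv ℝ g y (∑ i, y i • (Pi.single i 1 : Fin m → ℝ)) := by
      rw [← heq]
    rw [h2, map_sum]
    apply Finset.sum_eq_zero
    intro i _
    rw [map_smul, hcon i]
    simp
  rw [this] at heuler
  linarith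

/-- If the Minkowskian product Finsler manifold with `F² = f(K,H)` is Einstein
with nowhere-vanishing Einstein scalar `λ`, then `f_{KH} ≡ 0` on `(0,∞)²`, so
`f(K,H) = aK + bH` for positive constants `a, b`, and both factors are Einstein
with the same scalar function `λ`. -/
theorem stmt15 (m n : ℕ) (hm : 0 < m) (hn : 0 < n)
    (K : (Fin m → ℝ) → (Fin m → ℝ) → ℝ) (H : (Fin n → ℝ) → (Fin n → ℝ) → ℝ)
    (f : ℝ → ℝ → ℝ)
    -- product function conditions
    (hfsm : ContDiffOn ℝ (⊤ : ℕ∞) (fun p : ℝ × ℝ => f p.1 p.2) (Ioi 0 ×ˢ Ioi 0))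
    (hfnonneg : ∀ s t : ℝ, 0 ≤ s → 0 ≤ t → 0 ≤ f s t)
    (hfhom : ∀ l s t : ℝ, 0 ≤ l → 0 ≤ s → 0 ≤ t → f (l * s) (l * t) = l * f s t)
    (hfs : ∀ s t : ℝ, 0 < s → 0 < t → pd1 f s t ≠ 0)
    (hft : ∀ s t : ℝ, 0 < s → 0 < t → pd2 f s t ≠ 0)
    -- the factor metrics squared
    (hKsm : ∀ x₁, ContDiffOn ℝ (⊤ : ℕ∞) (K x₁) {y : Fin m → ℝ | y ≠ 0})
    (hHsm : ∀ x₂, ContDiffOn ℝ (⊤ : ℕ∞) (H x₂) {y : Fin n → ℝ | y ≠ 0})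
    (hKpos : ∀ x₁ y₁, y₁ ≠ 0 → 0 < K x₁ y₁)
    (hHpos : ∀ x₂ y₂, y₂ ≠ 0 → 0 < H x₂ y₂)
    (hKhom : ∀ x₁ y₁ (c : ℝ), 0 < c → K x₁ (c • y₁) = c ^ 2 * K x₁ y₁)
    (hHhom : ∀ x₂ y₂ (c : ℝ), 0 < c → H x₂ (c • y₂) = c ^ 2 * H x₂ y₂)
    -- Ricci curvatures of the factors; the product Ricci curvature splits
    (Ricbar : (Fin m → ℝ) → (Fin m → ℝ) → ℝ)
    (Rictil : (Fin n → ℝ) → (Fin n → ℝ) → ℝ)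
    (hbar : ∀ x₁, ContDiffOn ℝ (⊤ : ℕ∞) (Ricbar x₁) {y : Fin m → ℝ | y ≠ 0})
    (htil : ∀ x₂, ContDiffOn ℝ (⊤ : ℕ∞) (Rictil x₂) {y : Fin n → ℝ | y ≠ 0})
    (lam : ((Fin m → ℝ) × (Fin n → ℝ)) → ℝ)
    (hlam : ∀ x, lam x ≠ 0)
    -- Einstein condition `Ric_{ij} = (n−1) λ(x) g_{ij}` for the product metric
    (hEinstein :
      let F2 : ((Fin m → ℝ) × (Fin n → ℝ)) → ((Fin m → ℝ) × (Fin n → ℝ)) → ℝ :=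
        fun x y => f (K x.1 y.1) (H x.2 y.2)
      let Ric : ((Fin m → ℝ) × (Fin n → ℝ)) → ((Fin m → ℝ) × (Fin n → ℝ)) → ℝ :=
        fun x y => Ricbar x.1 y.1 + Rictil x.2 y.2
      let e : (Fin m ⊕ Fin n) → (Fin m → ℝ) × (Fin n → ℝ) :=
        Sum.elim (fun a => (Pi.single a 1, 0)) (fun β => (0, Pi.single β 1))
      ∀ (i j : Fin m ⊕ Fin n) x y, y.1 ≠ 0 → y.2 ≠ 0 →
        (1 / 2 : ℝ) * dirD2 (Ric x) (e i) (e j) y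
          = ((m + n : ℝ) - 1) * lam x * ((1 / 2 : ℝ) * dirD2 (F2 x) (e i) (e j) y)) :
    -- conclusions
    (∀ s t : ℝ, 0 < s → 0 < t → pd2 (pd1 f) s t = 0) ∧
    (∃ a b : ℝ, 0 < a ∧ 0 < b ∧ ∀ s t : ℝ, 0 < s → 0 < t → f s t = a * s + b * t) ∧
    (∀ x : (Fin m → ℝ) × (Fin n → ℝ),
      ∀ y : (Fin m → ℝ) × (Fin n → ℝ), y.1 ≠ 0 → y.2 ≠ 0 →
      (∀ a b : Fin m,
        (1 / 2 : ℝ) * dirD2 (Ricbar x.1) (Pi.single a 1) (Pi.single b 1) y.1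
          = ((m + n : ℝ) - 1) * lam x *
            ((1 / 2 : ℝ) * dirD2 (fun y' : (Fin m → ℝ) × (Fin n → ℝ) =>
                f (K x.1 y'.1) (H x.2 y'.2))
              (Pi.single a 1, 0) (Pi.single b 1, 0) y)) ∧
      (∀ α β : Fin n,
        (1 / 2 : ℝ) * dirD2 (Rictil x.2) (Pi.single α 1) (Pi.single β 1) y.2
          = ((m + n : ℝ) - 1) * lam x *
            ((1 / 2 : ℝ) * dirD2 (fun y' : (Fin m → ℝ) × (Fin n → ℝ) =>
                f (K x.1 y'.1) (H x.2 y'.2))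
              (0, Pi.single α 1) (0, Pi.single β 1) y))) := by
  classical
  have hU1 : IsOpen {y : Fin m → ℝ | y ≠ 0} := isOpen_ne
  have hU2 : IsOpen {y : Fin n → ℝ | y ≠ 0} := isOpen_ne
  have hQ : IsOpen ((Ioi (0:ℝ)) ×ˢ (Ioi (0:ℝ))) := isOpen_Ioi.prod isOpen_Ioi
  have hcoef : ((m : ℝ) + n - 1) ≠ 0 := by
    have h1 : (1:ℝ) ≤ m := by exact_mod_cast hm
    have h2 : (1:ℝ) ≤ n := by exact_mod_cast hn
    linarith
  -- Step A : the mixed second derivative of f vanishes on the quadrant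
  have hD12 : ∀ s t : ℝ, 0 < s → 0 < t →
      fderiv ℝ (fun q : ℝ × ℝ =>
        fderiv ℝ (fun p : ℝ × ℝ => f p.1 p.2) q (1, 0)) (s, t) (0, 1) = 0 := by
    intro s t hs ht
    -- construct y with K = s, H = t
    set i0 : Fin m := ⟨0, hm⟩
    set j0 : Fin n := ⟨0, hn⟩
    have hy10 : (Pi.single i0 1 : Fin m → ℝ) ≠ 0 := by
      intro h
      have := congrFun h i0
      simp at this
    have hy20 : (Pi.single j0 1 : Fin n → ℝ) ≠ 0 := by
      intro h
      have := congrFun h j0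
      simp at this
    have hk : 0 < K 0 (Pi.single i0 1) := hKpos 0 _ hy10
    have hh : 0 < H 0 (Pi.single j0 1) := hHpos 0 _ hy20
    set c1 : ℝ := Real.sqrt (s / K 0 (Pi.single i0 1)) with hc1def
    set c2 : ℝ := Real.sqrt (t / H 0 (Pi.single j0 1)) with hc2def
    have hc1 : 0 < c1 := Real.sqrt_pos.mpr (div_pos hs hk)
    have hc2 : 0 < c2 := Real.sqrt_pos.mpr (div_pos ht hh)
    set y1 : Fin m → ℝ := c1 • (Pi.single i0 1 : Fin m → ℝ) with hy1def
    set y2 : Fin n → ℝ := c2 • (Pi.single j0 1 : Fin n → ℝ) with hy2def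
    have hy1 : y1 ≠ 0 := smul_ne_zero (ne_of_gt hc1) hy10
    have hy2 : y2 ≠ 0 := smul_ne_zero (ne_of_gt hc2) hy20
    have hKy1 : K 0 y1 = s := by
      rw [hy1def, hKhom 0 _ c1 hc1, hc1def, Real.sq_sqrt (le_of_lt (div_pos hs hk))]
      field_simp
    have hHy2 : H 0 y2 = t := by
      rw [hy2def, hHhom 0 _ c2 hc2, hc2def, Real.sq_sqrt (le_of_lt (div_pos ht hh))]
      field_simp
    -- find coordinate directions with nonzero derivative of K, H
    obtain ⟨A, hA⟩ : ∃ a : Fin m, fderiv ℝ (K 0) y1 (Pi.single a 1) ≠ 0 :=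
      exists_basis_dir hy1 (hKsm 0) (by rw [hKy1]; exact hs)
        (fun c hc => hKhom 0 y1 c hc)
    obtain ⟨B, hB⟩ : ∃ b : Fin n, fderiv ℝ (H 0) y2 (Pi.single b 1) ≠ 0 :=
      exists_basis_dir hy2 (hHsm 0) (by rw [hHy2]; exact ht)
        (fun c hc => hHhom 0 y2 c hc)
    have hE := hEinstein (Sum.inl A) (Sum.inr B) ((0 : Fin m → ℝ), (0 : Fin n → ℝ))
      (y1, y2) hy1 hy2
    simp only [Sum.elim_inl, Sum.elim_inr] at hE
    -- left-hand side vanishes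
    have hL : dirD2 (fun y : (Fin m → ℝ) × (Fin n → ℝ) =>
        Ricbar ((0 : Fin m → ℝ), (0 : Fin n → ℝ)).1 y.1
          + Rictil ((0 : Fin m → ℝ), (0 : Fin n → ℝ)).2 y.2)
        (Pi.single A 1, 0) (0, Pi.single B 1) (y1, y2) = 0 := by
      rw [dirD2_split_inl hU1 hU2 (hbar _) (htil _)
        (show ((y1, y2) : (Fin m → ℝ) × (Fin n → ℝ)).1 ∈ {y : Fin m → ℝ | y ≠ 0} from hy1)
        (show ((y1, y2) : (Fin m → ℝ) × (Fin n → ℝ)).2 ∈ {y : Fin n → ℝ | y ≠ 0} from hy2)]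
      simp [dirD2, dirD]
    rw [hL] at hE
    -- right-hand side via the chain rule
    have hmix := chain_mixed (f2 := fun p : ℝ × ℝ => f p.1 p.2)
      (K := K 0) (H := H 0) hfsm hU1 hU2 (hKsm 0) (hHsm 0)
      (fun z hz => hKpos 0 z hz) (fun z hz => hHpos 0 z hz)
      (y := (y1, y2))
      (show ((y1, y2) : (Fin m → ℝ) × (Fin n → ℝ)).1 ∈ {y : Fin m → ℝ | y ≠ 0} from hy1)
      (show ((y1, y2) : (Fin m → ℝ) × (Fin n → ℝ)).2 ∈ {y : Fin n → ℝ | y ≠ 0} from hy2)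
      (Pi.single A 1) (Pi.single B 1)
    have hE2 : (0:ℝ) = ((m : ℝ) + n - 1) * lam ((0 : Fin m → ℝ), (0 : Fin n → ℝ)) *
        ((1/2 : ℝ) *
          (fderiv ℝ (fun q : ℝ × ℝ =>
            fderiv ℝ (fun p : ℝ × ℝ => f p.1 p.2) q (1, 0)) (K 0 y1, H 0 y2) (0, 1)
            * fderiv ℝ (K 0) y1 (Pi.single A 1) * fderiv ℝ (H 0) y2 (Pi.single B 1))) := by
      rw [← hmix]
      simpa using hE
    rw [hKy1, hHy2] at hE2
    have hlam' := hlam ((0 : Fin m → ℝ), (0 : Fin n → ℝ))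
    have h0 := hE2.symm
    have hne : ((m : ℝ) + n - 1) * lam ((0 : Fin m → ℝ), (0 : Fin n → ℝ)) ≠ 0 :=
      mul_ne_zero hcoef hlam'
    have h1 : (1/2 : ℝ) *
        (fderiv ℝ (fun q : ℝ × ℝ =>
          fderiv ℝ (fun p : ℝ × ℝ => f p.1 p.2) q (1, 0)) (s, t) (0, 1)
          * fderiv ℝ (K 0) y1 (Pi.single A 1) * fderiv ℝ (H 0) y2 (Pi.single B 1)) = 0 := by
      rcases mul_eq_zero.mp h0 with h | h
      · exact absurd h hne
      · exact h
    have h2 : fderiv ℝ (fun q : ℝ × ℝ =>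
          fderiv ℝ (fun p : ℝ × ℝ => f p.1 p.2) q (1, 0)) (s, t) (0, 1)
          * fderiv ℝ (K 0) y1 (Pi.single A 1) * fderiv ℝ (H 0) y2 (Pi.single B 1) = 0 := by
      linarith
    rcases mul_eq_zero.mp h2 with h | h
    · rcases mul_eq_zero.mp h with h' | h'
      · exact h'
      · exact absurd h' hA
    · exact absurd h hB
  refine ⟨?_, ?_, ?_⟩
  · -- conclusion 1
    intro s t hs ht
    rw [pd21_eq hfsm hs ht]
    exact hD12 s t hs ht
  · -- conclusion 2
    exact lin_of_D12 hfsm hfnonneg hfhom (hfs 1 1 one_pos one_pos)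
      (hft 1 1 one_pos one_pos) hD12
  · -- conclusion 3
    intro x y hy1 hy2
    constructor
    · intro a b
      have hE := hEinstein (Sum.inl a) (Sum.inl b) x y hy1 hy2
      simp only [Sum.elim_inl] at hE
      have hL : dirD2 (fun y : (Fin m → ℝ) × (Fin n → ℝ) =>
          Ricbar x.1 y.1 + Rictil x.2 y.2)
          (Pi.single a 1, 0) (Pi.single b 1, 0) y
          = dirD2 (Ricbar x.1) (Pi.single a 1) (Pi.single b 1) y.1 :=
        dirD2_split_inl hU1 hU2 (hbar _) (htil _) hy1 hy2 _ _
      rw [hL] at hE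
      exact hE
    · intro α β
      have hE := hEinstein (Sum.inr α) (Sum.inr β) x y hy1 hy2
      simp only [Sum.elim_inr] at hE
      have hL : dirD2 (fun y : (Fin m → ℝ) × (Fin n → ℝ) =>
          Ricbar x.1 y.1 + Rictil x.2 y.2)
          (0, Pi.single α 1) (0, Pi.single β 1) y
          = dirD2 (Rictil x.2) (Pi.single α 1) (Pi.single β 1) y.2 :=
        dirD2_split_inr hU1 hU2 (hbar _) (htil _) hy1 hy2 _ _
      rw [hL] at hE
      exact hE
end
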